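/- arXiv:1409.4632 — 5 statements merged into one kernel-verified Lean document; each statement's English description precedes it below -/
import Mathlib

section
/- For every integer n ≥ 4 and r, s ∈ {0, 1, …, n−3}, the graph G (equal to G_{n,r,s} or to G⁺_{n,r,s}) is 3-connected if and only if either (i) the plus edge is present and {r, s} = {1, n−3} (that is, r = 1 and s = n−3, or r = n−3 and s = 1), or (ii) r ≥ 2, s ≥ 2, and r + s ≥ n − 2. -/
namespace K24Paper

open SimpleGraph

/-- `H` is a minor of `G`: branch sets indexed by vertices of `H`, pairwise disjoint,
each inducing a connected subgraph of `G`, with every edge of `H` realized by an edge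
of `G` between the corresponding branch sets. -/
def IsMinor {W V : Type*} (H : SimpleGraph W) (G : SimpleGraph V) : Prop :=
  ∃ B : W → Set V,
    (∀ w, (G.induce (B w)).Connected) ∧
    (∀ w₁ w₂, w₁ ≠ w₂ → Disjoint (B w₁) (B w₂)) ∧
    (∀ w₁ w₂, H.Adj w₁ w₂ → ∃ v₁ ∈ B w₁, ∃ v₂ ∈ B w₂, G.Adj v₁ v₂)

/-- `G` is `H`-minor-free. -/
def MinorFree {W V : Type*} (H : SimpleGraph W) (G : SimpleGraph V) : Prop :=
  ¬ IsMinor H G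

/-- The complete bipartite graph `K_{2,4}`. -/
def K24 : SimpleGraph (Fin 2 ⊕ Fin 4) := completeBipartiteGraph (Fin 2) (Fin 4)

/-- `G` is `k`-connected: more than `k` vertices, and removing fewer than `k`
vertices leaves a connected graph. -/
def KConnected {V : Type*} (k : ℕ) (G : SimpleGraph V) : Prop :=
  k < Nat.card V ∧ ∀ S : Set V, S.ncard < k → (G.induce Sᶜ).Connected

/-- The graph `G_{n,r,s}` (with the plus edge if `plus = true`), on vertices
`0, …, n-1` corresponding to `v_1, …, v_n`:  the spine `v_1 v_2 ⋯ v_n`, the edges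
`v_1 v_{n-i}` for `1 ≤ i ≤ r`, the edges `v_n v_{1+j}` for `1 ≤ j ≤ s`, and
(if `plus`) the plus edge `v_1 v_n`. -/
def Gnrs (n r s : ℕ) (plus : Bool) : SimpleGraph (Fin n) :=
  SimpleGraph.fromRel (fun a b =>
    b.val = a.val + 1 ∨
    (a.val = 0 ∧ n - 1 - r ≤ b.val ∧ b.val ≤ n - 2) ∨
    (b.val = n - 1 ∧ 1 ≤ a.val ∧ a.val ≤ s) ∨
    (plus = true ∧ a.val = 0 ∧ b.val = n - 1))

/-- The parameter conditions describing membership in the class `𝒢`. -/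
def Gparams (n r s : ℕ) (plus : Bool) : Prop :=
  (plus = true ∧ 4 ≤ n ∧ ((r = 1 ∧ s = n - 3) ∨ (r = n - 3 ∧ s = 1))) ∨
  (5 ≤ n ∧ 2 ≤ r ∧ r ≤ n - 3 ∧ 2 ≤ s ∧ s ≤ n - 3 ∧ (r + s = n - 2 ∨ r + s = n - 1))

/-- `G` belongs to `𝒢̃`, i.e. `G` is isomorphic to a graph of the class `𝒢`. -/
def InGtilde {V : Type*} (G : SimpleGraph V) : Prop :=
  ∃ n r s plus, Gparams n r s plus ∧ Nonempty (G ≃g Gnrs n r s plus)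

/-- The graph obtained from `G` by subdividing every edge in `F` once:
new vertices are the members of `F`. -/
def SubdivideEdges {V : Type*} (G : SimpleGraph V) (F : Set (Sym2 V)) :
    SimpleGraph (V ⊕ F) :=
  SimpleGraph.fromRel (fun a b =>
    match a, b with
    | Sum.inl u, Sum.inl v => G.Adj u v ∧ s(u, v) ∉ F
    | Sum.inl u, Sum.inr e => u ∈ (e : Sym2 V)
    | Sum.inr e, Sum.inl u => u ∈ (e : Sym2 V)
    | Sum.inr _, Sum.inr _ => False)

/-- A set `F` of edges of a graph `G` is subdividable if subdividing every edge
of `F` once yields a `K_{2,4}`-minor-free graph. -/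
def Subdividable {V : Type*} (G : SimpleGraph V) (F : Set (Sym2 V)) : Prop :=
  F ⊆ G.edgeSet ∧ MinorFree K24 (SubdivideEdges G F)

/-- `F` is a maximal subdividable set of edges of `G`. -/
def MaxSubdividable {V : Type*} (G : SimpleGraph V) (F : Set (Sym2 V)) : Prop :=
  Subdividable G F ∧ ∀ F', Subdividable G F' → F ⊆ F' → F' = F

/-- `l` lists vertices along a path of `G` (consecutive entries adjacent, no repeats)
such that no two edges of `G` cross with respect to this ordering. -/
def OuterListing {U : Type*} (G : SimpleGraph U) (l : List U) : Prop :=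
  l.Nodup ∧ l.Chain' G.Adj ∧
  ∀ (i k j m : ℕ) (h1 : i < k) (h2 : k < j) (h3 : j < m) (hm : m < l.length),
    ¬(G.Adj (l.get ⟨i, by omega⟩) (l.get ⟨j, by omega⟩) ∧
      G.Adj (l.get ⟨k, by omega⟩) (l.get ⟨m, by omega⟩))

/-- The graph `G` restricted to the vertex set `A` is `xy`-outerplanar: it has a
hamilton `xy`-path (listing exactly the vertices of `A`) such that no two edges
cross with respect to it. -/
def XYOuterplanar {U : Type*} (G : SimpleGraph U) (A : Set U) (x y : U) : Prop :=
  ∃ l : List U, (∀ v, v ∈ l ↔ v ∈ A) ∧ l.head? = some x ∧ l.getLast? = some y ∧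
    OuterListing G l

/-- A block: a connected graph with no cutvertex. -/
def IsBlock {V : Type*} (G : SimpleGraph V) : Prop :=
  G.Connected ∧ ∀ v : V, (G.induce {u | u ≠ v}).Preconnected

/-- `G + xy`: the graph `G` with the edge `xy` added (if not already present). -/
def AddEdge {U : Type*} (G : SimpleGraph U) (x y : U) : SimpleGraph U :=
  G ⊔ SimpleGraph.fromRel (fun a b => a = x ∧ b = y)

/-- A standard `K_{2,t}` minor `(R₁, R₂; S)` of `G`. -/
def StdK2tMinor {V : Type*} (G : SimpleGraph V) (t : ℕ) (R₁ R₂ S : Set V) : Prop :=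
  Disjoint R₁ R₂ ∧ Disjoint (R₁ ∪ R₂) S ∧
  (G.induce R₁).Connected ∧ (G.induce R₂).Connected ∧
  S.Finite ∧ S.ncard = t ∧
  ∀ v ∈ S, (∃ w ∈ R₁, G.Adj v w) ∧ (∃ w ∈ R₂, G.Adj v w)

/-- `K_{3,3}` with parts `{0,1,2}` and `{3,4,5}`. -/
def K33 : SimpleGraph (Fin 6) :=
  SimpleGraph.fromRel (fun a b => a.val < 3 ∧ 3 ≤ b.val)

/-- The graph `A = K_{3,3} + v₂v₃`. -/
def GA : SimpleGraph (Fin 6) := AddEdge K33 1 2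

/-- The graph `A⁺ = K_{3,3} + v₂v₃ + v₅v₆`. -/
def GAplus : SimpleGraph (Fin 6) := AddEdge GA 4 5

/-- The graph `B`, on vertices `h, r₁, r₂, r₃, r₄, g₁, g₂ = 0, …, 6`. -/
def GB : SimpleGraph (Fin 7) :=
  SimpleGraph.fromRel (fun a b => (a.val, b.val) ∈
    [(0,3),(0,4),(1,4),(2,3),(3,4),(5,0),(5,1),(5,2),(6,0),(6,1),(6,2)])

/-- The graph `B⁺ = B + g₁g₂`. -/
def GBplus : SimpleGraph (Fin 7) := AddEdge GB 5 6

/-- The graph `C⁺`, on vertices `v₁, …, v₈ = 0, …, 7`. -/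
def GCplus : SimpleGraph (Fin 8) :=
  SimpleGraph.fromRel (fun a b => (a.val, b.val) ∈
    [(0,1),(0,2),(1,2),(3,4),(3,5),(3,6),(3,7),(4,5),(4,6),(4,7),(2,5),(1,7),(0,6)])

/-- The graph `C = C⁺ ∖ v₄v₅`. -/
def GC : SimpleGraph (Fin 8) := GCplus.deleteEdges {s(3, 4)}

/-- The graph `D`, on vertices `t₁, t₂, t₃, d₁, d₂, d₃, g = 0, …, 6`. -/
def GD : SimpleGraph (Fin 7) :=
  SimpleGraph.fromRel (fun a b => (a.val, b.val) ∈
    [(0,1),(0,2),(1,2),(3,4),(3,5),(4,5),(0,3),(1,4),(2,5),(6,0),(6,1),(6,2)])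

/-- The complete graph `K₅`. -/
def GK5 : SimpleGraph (Fin 5) := completeGraph (Fin 5)

end K24Paper

/-!
If the condition fails, some vertex has only two neighbours, which then form a separating pair:
`v_{s+2}` when `r + s ≤ n - 3`, and `v_1` (resp. `v_n`) when `(r, s) = (1, n - 3)`
(resp. `(n - 3, 1)`) and the plus edge is missing.

Conversely, delete at most two vertices. If both ends `v_1, v_n` survive, then, as
`r + s ≥ n - 2`, every inner vertex is adjacent to one of them, and the ends are joined by the
plus edge, through `v_2` or `v_{n-1}`, or, when both of these are deleted, along
`v_n v_3 ⋯ v_{n-2} v_1`, which needs `r, s ≥ 2`. If only `v_n` survives, a vertex reaches it along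
the spine, or, when the second deleted vertex blocks that way, along the spine down to `v_2`,
which is adjacent to `v_n`; symmetrically if only `v_1` survives. If both ends are deleted, the
rest of the spine survives.
-/

namespace K24Paper

open SimpleGraph

section General

variable {V : Type*} {G : SimpleGraph V}

theorem KConnected.exists_adj_notMem {k : ℕ} (hG : KConnected k G) {S : Set V}
    (hS : S.ncard < k) {x : V} (hx : x ∉ S) : ∃ y ∉ S, G.Adj x y := by
  have hcard := hG.1
  have : Finite V := Nat.finite_of_card_ne_zero (by omega)
  obtain ⟨y, hy⟩ : ∃ y, y ∉ insert x S := by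
    by_contra! h
    have := Set.ncard_insert_le x S
    rw [Set.eq_univ_of_forall h, Set.ncard_univ] at this
    omega
  rw [Set.mem_insert_iff, not_or] at hy
  obtain ⟨p⟩ := (hG.2 S hS).preconnected ⟨x, hx⟩ ⟨y, hy.2⟩
  have hp : ¬ p.Nil := Walk.not_nil_of_ne fun h => hy.1 (congrArg Subtype.val h).symm
  exact ⟨p.snd, p.snd.2, p.adj_snd hp⟩

theorem not_kConnected_three_of_neighborSet_subset {x a b : V} (hxa : x ≠ a) (hxb : x ≠ b)
    (h : G.neighborSet x ⊆ {a, b}) : ¬ KConnected 3 G := fun hG => by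
  have hS : ({a, b} : Set V).ncard < 3 :=
    (Set.ncard_insert_le a {b}).trans_lt (by rw [Set.ncard_singleton]; omega)
  obtain ⟨y, hy, hxy⟩ := hG.exists_adj_notMem hS (x := x) (by simp [hxa, hxb])
  exact hy (h hxy)

theorem induce_reachable_of_adj {T : Set V} {u v : V} (hu : u ∈ T) (hv : v ∈ T)
    (h : G.Adj u v) : (G.induce T).Reachable ⟨u, hu⟩ ⟨v, hv⟩ :=
  Adj.reachable h

end General

theorem notMem_of_ncard_lt_three {α : Type*} [Finite α] {S : Set α} (hS : S.ncard < 3)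
    {a b c : α} (ha : a ∈ S) (hb : b ∈ S) (hab : a ≠ b) (hca : c ≠ a) (hcb : c ≠ b) : c ∉ S :=
  fun hc => hS.not_ge <|
    (Set.two_lt_ncard (Set.toFinite S)).2 ⟨a, ha, b, hb, c, hc, hab, hca.symm, hcb.symm⟩

theorem induce_reachable_of_uIcc_subset {n : ℕ} {G : SimpleGraph (Fin n)}
    (hG : ∀ u v : Fin n, v.val = u.val + 1 → G.Adj u v) {T : Set (Fin n)} {u v : Fin n}
    (hu : u ∈ T) (hv : v ∈ T) (hT : Set.uIcc u v ⊆ T) :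
    (G.induce T).Reachable ⟨u, hu⟩ ⟨v, hv⟩ := by
  wlog huv : u ≤ v generalizing u v
  · exact (this hv hu (Set.uIcc_comm u v ▸ hT) (le_of_not_ge huv)).symm
  obtain ⟨k, hk⟩ : ∃ k, v.val = u.val + k := ⟨v.val - u.val, by omega⟩
  induction k generalizing v with
  | zero => obtain rfl : v = u := Fin.ext hk; rfl
  | succ k ih =>
    obtain ⟨w, hwk⟩ : ∃ w : Fin n, w.val = u.val + k := ⟨⟨u.val + k, by omega⟩, rfl⟩
    have huw : Set.uIcc u w ⊆ T := fun z hz => hT (by rw [Set.mem_uIcc] at hz ⊢; omega)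
    have hw : w ∈ T := huw Set.right_mem_uIcc
    exact (ih hw huw (by omega) hwk).trans (induce_reachable_of_adj hw hv (hG w v (by omega)))

section Gnrs

variable {n r s : ℕ} {plus : Bool}

theorem Gnrs.adj_of_val_eq_succ (u v : Fin n) (h : v.val = u.val + 1) :
    (Gnrs n r s plus).Adj u v := by
  simp [Gnrs]; omega

theorem Gnrs.of_kConnected_three (hr : r ≤ n - 3) (hs : s ≤ n - 3)
    (hK : KConnected 3 (Gnrs n r s plus)) :
    (plus = true ∧ ((r = 1 ∧ s = n - 3) ∨ (r = n - 3 ∧ s = 1))) ∨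
      (2 ≤ r ∧ 2 ≤ s ∧ n - 2 ≤ r + s) := by
  have hn : 3 < n := by simpa using hK.1
  by_contra hcond
  rcases (show r + s ≤ n - 3 ∨ (plus = false ∧ r = 1 ∧ s = n - 3) ∨
      (plus = false ∧ r = n - 3 ∧ s = 1) by cases plus <;> simp at hcond ⊢ <;> omega) with
    h | ⟨rfl, h⟩ | ⟨rfl, h⟩
  · refine not_kConnected_three_of_neighborSet_subset (x := ⟨s + 1, by omega⟩)
      (a := ⟨s, by omega⟩) (b := ⟨s + 2, by omega⟩) (Fin.ne_of_val_ne (show s + 1 ≠ s by omega))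
      (Fin.ne_of_val_ne (show s + 1 ≠ s + 2 by omega)) (fun y hy => ?_) hK
    simp [Gnrs, Fin.ext_iff] at hy ⊢; omega
  · refine not_kConnected_three_of_neighborSet_subset (x := ⟨0, by omega⟩)
      (a := ⟨1, by omega⟩) (b := ⟨n - 2, by omega⟩) (Fin.ne_of_val_ne (show 0 ≠ 1 by omega))
      (Fin.ne_of_val_ne (show 0 ≠ n - 2 by omega)) (fun y hy => ?_) hK
    simp [Gnrs, Fin.ext_iff] at hy ⊢; omega
  · refine not_kConnected_three_of_neighborSet_subset (x := ⟨n - 1, by omega⟩)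
      (a := ⟨n - 2, by omega⟩) (b := ⟨1, by omega⟩) (Fin.ne_of_val_ne (show n - 1 ≠ n - 2 by omega))
      (Fin.ne_of_val_ne (show n - 1 ≠ 1 by omega)) (fun y hy => ?_) hK
    simp [Gnrs, Fin.ext_iff] at hy ⊢; omega

theorem Gnrs.reachable_last_first (hn : 4 ≤ n)
    (hlink : plus = true ∨ (2 ≤ r ∧ 2 ≤ s ∧ 5 ≤ n)) {S : Set (Fin n)} (hS : S.ncard < 3)
    {first last : Fin n} (hfirst : first.val = 0) (hlast : last.val = n - 1)
    (h0 : first ∉ S) (hl : last ∉ S) :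
    ((Gnrs n r s plus).induce Sᶜ).Reachable ⟨last, hl⟩ ⟨first, h0⟩ := by
  rcases hlink with hp | ⟨hr2, hs2, hn5⟩
  · exact induce_reachable_of_adj hl h0 (by simp [Gnrs, hp]; omega)
  obtain ⟨v1, hv1⟩ : ∃ v : Fin n, v.val = 1 := ⟨⟨1, by omega⟩, rfl⟩
  obtain ⟨v2, hv2⟩ : ∃ v : Fin n, v.val = n - 2 := ⟨⟨n - 2, by omega⟩, rfl⟩
  by_cases h1 : v1 ∈ S
  · by_cases h2 : v2 ∈ S
    · obtain ⟨a, ha⟩ : ∃ v : Fin n, v.val = 2 := ⟨⟨2, by omega⟩, rfl⟩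
      obtain ⟨b, hb⟩ : ∃ v : Fin n, v.val = n - 3 := ⟨⟨n - 3, by omega⟩, rfl⟩
      have hab : Set.uIcc a b ⊆ Sᶜ := fun z hz => by
        rw [Set.mem_uIcc] at hz
        exact notMem_of_ncard_lt_three hS h1 h2 (by omega) (by omega) (by omega)
      have haS := hab Set.left_mem_uIcc
      have hbS := hab Set.right_mem_uIcc
      exact ((induce_reachable_of_adj hl haS (by simp [Gnrs]; omega)).trans
        (induce_reachable_of_uIcc_subset Gnrs.adj_of_val_eq_succ haS hbS hab)).trans
        (induce_reachable_of_adj hbS h0 (by simp [Gnrs]; omega))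
    · exact (induce_reachable_of_adj hl h2 (by simp [Gnrs]; omega)).trans
        (induce_reachable_of_adj h2 h0 (by simp [Gnrs]; omega))
  · exact (induce_reachable_of_adj hl h1 (by simp [Gnrs]; omega)).trans
      (induce_reachable_of_adj h1 h0 (by simp [Gnrs]; omega))

theorem Gnrs.reachable_last_of_first_mem (hs : 1 ≤ s) {S : Set (Fin n)} (hS : S.ncard < 3)
    {first last w : Fin n} (hfirst : first.val = 0) (hlast : last.val = n - 1)
    (h0 : first ∈ S) (hl : last ∉ S) (hw : w ∉ S) :
    ((Gnrs n r s plus).induce Sᶜ).Reachable ⟨w, hw⟩ ⟨last, hl⟩ := by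
  by_cases hup : Set.uIcc w last ⊆ Sᶜ
  · exact induce_reachable_of_uIcc_subset Gnrs.adj_of_val_eq_succ hw hl hup
  obtain ⟨z, hz, hzS⟩ := Set.not_subset.1 hup
  rw [Set.notMem_compl_iff] at hzS
  rw [Set.mem_uIcc] at hz
  have hw0 : w ≠ first := fun h => hw (h ▸ h0)
  have hzw : z ≠ w := fun h => hw (h ▸ hzS)
  have hzl : z ≠ last := fun h => hl (h ▸ hzS)
  obtain ⟨v1, hv1⟩ : ∃ v : Fin n, v.val = 1 := ⟨⟨1, by omega⟩, rfl⟩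
  have hlow : Set.uIcc w v1 ⊆ Sᶜ := fun u hu => by
    rw [Set.mem_uIcc] at hu
    exact notMem_of_ncard_lt_three hS h0 hzS (by omega) (by omega) (by omega)
  have h1 := hlow Set.right_mem_uIcc
  exact (induce_reachable_of_uIcc_subset Gnrs.adj_of_val_eq_succ hw h1 hlow).trans
    (induce_reachable_of_adj h1 hl (by simp [Gnrs]; omega))

theorem Gnrs.reachable_first_of_last_mem (hr : 1 ≤ r) {S : Set (Fin n)} (hS : S.ncard < 3)
    {first last w : Fin n} (hfirst : first.val = 0) (hlast : last.val = n - 1)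
    (h0 : first ∉ S) (hl : last ∈ S) (hw : w ∉ S) :
    ((Gnrs n r s plus).induce Sᶜ).Reachable ⟨w, hw⟩ ⟨first, h0⟩ := by
  by_cases hdown : Set.uIcc w first ⊆ Sᶜ
  · exact induce_reachable_of_uIcc_subset Gnrs.adj_of_val_eq_succ hw h0 hdown
  obtain ⟨z, hz, hzS⟩ := Set.not_subset.1 hdown
  rw [Set.notMem_compl_iff] at hzS
  rw [Set.mem_uIcc] at hz
  have hwl : w ≠ last := fun h => hw (h ▸ hl)
  have hzw : z ≠ w := fun h => hw (h ▸ hzS)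
  have hz0 : z ≠ first := fun h => h0 (h ▸ hzS)
  obtain ⟨v, hv⟩ : ∃ v : Fin n, v.val = n - 2 := ⟨⟨n - 2, by omega⟩, rfl⟩
  have hhigh : Set.uIcc w v ⊆ Sᶜ := fun u hu => by
    rw [Set.mem_uIcc] at hu
    exact notMem_of_ncard_lt_three hS hl hzS (by omega) (by omega) (by omega)
  have hvS := hhigh Set.right_mem_uIcc
  exact (induce_reachable_of_uIcc_subset Gnrs.adj_of_val_eq_succ hw hvS hhigh).trans
    (induce_reachable_of_adj hvS h0 (by simp [Gnrs]; omega))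

theorem Gnrs.connected_induce_compl_of_first_mem_of_last_mem (hn : 3 ≤ n) {S : Set (Fin n)}
    (hS : S.ncard < 3) {first last : Fin n} (hfirst : first.val = 0) (hlast : last.val = n - 1)
    (h0 : first ∈ S) (hl : last ∈ S) :
    ((Gnrs n r s plus).induce Sᶜ).Connected := by
  have inner_notMem : ∀ z : Fin n, z.val ≠ 0 → z.val ≠ n - 1 → z ∉ S := fun z hz0 hzl =>
    notMem_of_ncard_lt_three hS h0 hl (by omega) (by omega) (by omega)
  obtain ⟨v1, hv1⟩ : ∃ v : Fin n, v.val = 1 := ⟨⟨1, by omega⟩, rfl⟩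
  have h1 := inner_notMem v1 (by omega) (by omega)
  rw [connected_iff_exists_forall_reachable]
  refine ⟨⟨v1, h1⟩, fun ⟨w, hw⟩ => induce_reachable_of_uIcc_subset Gnrs.adj_of_val_eq_succ h1 hw
    fun z hz => ?_⟩
  have hw0 : w ≠ first := fun h => hw (h ▸ h0)
  have hwl : w ≠ last := fun h => hw (h ▸ hl)
  rw [Set.mem_uIcc] at hz
  exact inner_notMem z (by omega) (by omega)

theorem Gnrs.connected_induce_compl (hn : 4 ≤ n) (hr : 1 ≤ r) (hs : 1 ≤ s)
    (hrs : n - 2 ≤ r + s) (hlink : plus = true ∨ (2 ≤ r ∧ 2 ≤ s ∧ 5 ≤ n))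
    {S : Set (Fin n)} (hS : S.ncard < 3) : ((Gnrs n r s plus).induce Sᶜ).Connected := by
  obtain ⟨first, hfirst⟩ : ∃ v : Fin n, v.val = 0 := ⟨⟨0, by omega⟩, rfl⟩
  obtain ⟨last, hlast⟩ : ∃ v : Fin n, v.val = n - 1 := ⟨⟨n - 1, by omega⟩, rfl⟩
  by_cases h0 : first ∈ S <;> by_cases hl : last ∈ S
  · exact Gnrs.connected_induce_compl_of_first_mem_of_last_mem (by omega) hS hfirst hlast h0 hl
  all_goals rw [connected_iff_exists_forall_reachable]
  · exact ⟨⟨last, hl⟩, fun ⟨w, hw⟩ =>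
      (Gnrs.reachable_last_of_first_mem hs hS hfirst hlast h0 hl hw).symm⟩
  · exact ⟨⟨first, h0⟩, fun ⟨w, hw⟩ =>
      (Gnrs.reachable_first_of_last_mem hr hS hfirst hlast h0 hl hw).symm⟩
  have hub := Gnrs.reachable_last_first hn hlink hS hfirst hlast h0 hl
  refine ⟨⟨first, h0⟩, fun ⟨w, hw⟩ => ?_⟩
  rcases (show w.val = 0 ∨ w.val = n - 1 ∨ (0 < w.val ∧ n - 1 - r ≤ w.val ∧ w.val < n - 1) ∨
      (0 < w.val ∧ w.val ≤ s ∧ w.val < n - 1) by omega) with hw0 | hwl | hw0 | hwl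
  · obtain rfl : w = first := Fin.ext (by omega)
    rfl
  · obtain rfl : w = last := Fin.ext (by omega)
    exact hub.symm
  · exact induce_reachable_of_adj h0 hw (by simp [Gnrs]; omega)
  · exact hub.symm.trans (induce_reachable_of_adj hl hw (by simp [Gnrs]; omega))

theorem Gnrs.kConnected_three (hn : 4 ≤ n) (hr : 1 ≤ r) (hs : 1 ≤ s)
    (hrs : n - 2 ≤ r + s) (hlink : plus = true ∨ (2 ≤ r ∧ 2 ≤ s ∧ 5 ≤ n)) :
    KConnected 3 (Gnrs n r s plus) :=
  ⟨by simp; omega, fun _ hS => Gnrs.connected_induce_compl hn hr hs hrs hlink hS⟩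

end Gnrs

theorem Gnrs_threeConnected_iff_general (n r s : ℕ) (plus : Bool)
    (hr : r ≤ n - 3) (hs : s ≤ n - 3) :
    KConnected 3 (Gnrs n r s plus) ↔
      ((plus = true ∧ ((r = 1 ∧ s = n - 3) ∨ (r = n - 3 ∧ s = 1))) ∨
       (2 ≤ r ∧ 2 ≤ s ∧ n - 2 ≤ r + s)) := by
  refine ⟨Gnrs.of_kConnected_three hr hs, ?_⟩
  rintro (⟨hp, h⟩ | h)
  · exact Gnrs.kConnected_three (by omega) (by omega) (by omega) (by omega) (.inl hp)
  · exact Gnrs.kConnected_three (by omega) (by omega) (by omega) (by omega) (.inr (by omega))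

/-- Lemma 1: for `n ≥ 4` and `r, s ∈ {0, …, n-3}`, the graph
`G^{(+)}_{n,r,s}` is 3-connected iff (i) the plus edge is present and
`{r,s} = {1, n-3}`, or (ii) `r, s ≥ 2` and `r + s ≥ n - 2`. -/
theorem Gnrs_threeConnected_iff (n r s : ℕ) (plus : Bool)
    (hn : 4 ≤ n) (hr : r ≤ n - 3) (hs : s ≤ n - 3) :
    KConnected 3 (Gnrs n r s plus) ↔
      ((plus = true ∧ ((r = 1 ∧ s = n - 3) ∨ (r = n - 3 ∧ s = 1))) ∨
       (2 ≤ r ∧ 2 ≤ s ∧ n - 2 ≤ r + s)) :=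
  Gnrs_threeConnected_iff_general n r s plus hr hs

end K24Paper
end

section
/- For every integer n ≥ 6 and r, s ∈ {0, 1, …, n−3}, the graph G (equal to G_{n,r,s} or to G⁺_{n,r,s}) is K_{2,4}-minor-free if and only if r + s ≤ n − 1. -/
set_option maxHeartbeats 1600000


namespace K24Paper

open SimpleGraph


section Aux

variable {n r s : ℕ} {plus : Bool}

lemma adj_cases {u v : Fin n} (h : (Gnrs n r s plus).Adj u v) :
    u.val ≠ v.val ∧ (v.val = u.val + 1 ∨ u.val = v.val + 1 ∨
      (u.val = 0 ∧ n-1-r ≤ v.val ∧ v.val ≤ n-2) ∨ (v.val = 0 ∧ n-1-r ≤ u.val ∧ u.val ≤ n-2) ∨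
      (v.val = n-1 ∧ 1 ≤ u.val ∧ u.val ≤ s) ∨ (u.val = n-1 ∧ 1 ≤ v.val ∧ v.val ≤ s) ∨
      (u.val = 0 ∧ v.val = n-1) ∨ (v.val = 0 ∧ u.val = n-1)) := by
  rw [Gnrs, SimpleGraph.fromRel_adj] at h
  obtain ⟨hne, h⟩ := h
  refine ⟨fun he => hne (Fin.ext he), ?_⟩
  rcases h with (h|h|h|h)|(h|h|h|h) <;> tauto

lemma adj_of {u v : Fin n} (hne : u.val ≠ v.val)
    (h : v.val = u.val + 1 ∨ u.val = v.val + 1 ∨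
      (u.val = 0 ∧ n-1-r ≤ v.val ∧ v.val ≤ n-2) ∨ (v.val = 0 ∧ n-1-r ≤ u.val ∧ u.val ≤ n-2) ∨
      (u.val = n-1 ∧ 1 ≤ v.val ∧ v.val ≤ s) ∨ (v.val = n-1 ∧ 1 ≤ u.val ∧ u.val ≤ s)) :
    (Gnrs n r s plus).Adj u v := by
  rw [Gnrs, SimpleGraph.fromRel_adj]
  refine ⟨fun e => hne (congrArg Fin.val e), ?_⟩
  rcases h with h|h|h|h|h|h
  · exact Or.inl (Or.inl h)
  · exact Or.inr (Or.inl h)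
  · exact Or.inl (Or.inr (Or.inl h))
  · exact Or.inr (Or.inr (Or.inl h))
  · exact Or.inr (Or.inr (Or.inr (Or.inl ⟨h.1, h.2.1, h.2.2⟩)))
  · exact Or.inl (Or.inr (Or.inr (Or.inl ⟨h.1, h.2.1, h.2.2⟩)))

lemma adj_to_last {z c : Fin n} (hn : 6 ≤ n) (hz : z.val = n-1)
    (h : (Gnrs n r s plus).Adj c z) (hc1 : 1 ≤ c.val) (hc2 : c.val ≤ n-2) :
    c.val ≤ s ∨ c.val = n-2 := by
  have := adj_cases h; omega

lemma adj_to_zero {z c : Fin n} (hn : 6 ≤ n) (hz : z.val = 0)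
    (h : (Gnrs n r s plus).Adj c z) (hc1 : 1 ≤ c.val) (hc2 : c.val ≤ n-2) :
    c.val = 1 ∨ n-1-r ≤ c.val := by
  have := adj_cases h; omega

lemma walk_cover (hn : 6 ≤ n) {T : Set (Fin n)} (hfree : ∀ v ∈ T, 1 ≤ v.val ∧ v.val ≤ n - 2)
    {u w : ↥T} (P : ((Gnrs n r s plus).induce T).Walk u w) :
    ∀ t : Fin n, min (u : Fin n).val (w : Fin n).val ≤ t.val →
      t.val ≤ max (u : Fin n).val (w : Fin n).val → t ∈ T := by
  induction P with
  | @nil x =>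
    intro t h1 h2
    have : t = ↑x := Fin.ext (by omega)
    exact this ▸ x.2
  | @cons a b c hadj P ih =>
    intro t h1 h2
    have hab : (Gnrs n r s plus).Adj ↑a ↑b := by simpa using hadj
    have h1' := hfree _ a.2
    have h2' := hfree _ b.2
    have hstep : (a : Fin n).val = (b : Fin n).val + 1 ∨ (b : Fin n).val = (a : Fin n).val + 1 := by
      have := adj_cases hab; omega
    by_cases hx : min (b : Fin n).val (c : Fin n).val ≤ t.val ∧
        t.val ≤ max (b : Fin n).val (c : Fin n).val
    · exact ih t hx.1 hx.2
    · have : t = ↑a := Fin.ext (by omega)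
      exact this ▸ a.2

lemma conn_cover (hn : 6 ≤ n) {T : Set (Fin n)}
    (hc : ((Gnrs n r s plus).induce T).Connected)
    (hfree : ∀ v ∈ T, 1 ≤ v.val ∧ v.val ≤ n - 2)
    {a b : Fin n} (ha : a ∈ T) (hb : b ∈ T) (t : Fin n)
    (h1 : min a.val b.val ≤ t.val) (h2 : t.val ≤ max a.val b.val) : t ∈ T := by
  obtain ⟨P⟩ := hc.preconnected ⟨a, ha⟩ ⟨b, hb⟩
  exact walk_cover hn hfree P t h1 h2

lemma reach_hub (hn : 6 ≤ n) {T : Set (Fin n)} {h : Fin n}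
    (hfree : ∀ v ∈ T, v ≠ h → 1 ≤ v.val ∧ v.val ≤ n - 2)
    {u v : ↥T} (P : ((Gnrs n r s plus).induce T).Walk u v)
    (hv : (v : Fin n) = h) :
    (u : Fin n) ≠ h →
    ∃ c : Fin n, c ∈ T ∧ c ≠ h ∧ (Gnrs n r s plus).Adj c h ∧
      ∀ t : Fin n, min (u : Fin n).val c.val ≤ t.val →
        t.val ≤ max (u : Fin n).val c.val → t ∈ T := by
  induction P with
  | nil => intro hu; exact absurd hv hu
  | @cons a b c hadj P ih =>
    intro hu
    have hab : (Gnrs n r s plus).Adj ↑a ↑b := by simpa using hadj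
    by_cases hb : (b : Fin n) = h
    · refine ⟨↑a, a.2, hu, by rwa [hb] at hab, fun t h1 h2 => ?_⟩
      have : t = ↑a := Fin.ext (by omega)
      exact this ▸ a.2
    · obtain ⟨cc, hcT, hch, hcadj, hcov⟩ := ih hv hb
      refine ⟨cc, hcT, hch, hcadj, fun t h1 h2 => ?_⟩
      have ha' := hfree _ a.2 hu
      have hb' := hfree _ b.2 hb
      have hstep : (a:Fin n).val = (b:Fin n).val + 1 ∨ (b:Fin n).val = (a:Fin n).val + 1 := by
        have := adj_cases hab; omega
      by_cases hx : min (b:Fin n).val cc.val ≤ t.val ∧ t.val ≤ max (b:Fin n).val cc.val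
      · exact hcov t hx.1 hx.2
      · have : t = ↑a := Fin.ext (by omega)
        exact this ▸ a.2

lemma interval_connected (hn : 6 ≤ n) (a b : ℕ) (hab : a ≤ b) (hb : b ≤ n - 1) :
    ((Gnrs n r s plus).induce {v : Fin n | a ≤ v.val ∧ v.val ≤ b}).Connected := by
  have hbn : b < n := by omega
  rw [connected_iff]
  constructor
  · have key : ∀ t (ht1 : a ≤ t) (ht : t ≤ b),
        ((Gnrs n r s plus).induce {v : Fin n | a ≤ v.val ∧ v.val ≤ b}).Reachable
          ⟨⟨a, by omega⟩, ⟨le_refl a, hab⟩⟩ ⟨⟨t, by omega⟩, ⟨ht1, ht⟩⟩ := by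
      intro t ht1
      induction t, ht1 using Nat.le_induction with
      | base => intro _; rfl
      | succ t ht1 ih =>
        intro ht
        refine (ih (by omega)).trans (Adj.reachable ?_)
        show (Gnrs n r s plus).Adj ⟨t, by omega⟩ ⟨t+1, by omega⟩
        rw [Gnrs, SimpleGraph.fromRel_adj]
        exact ⟨by simp [Fin.ext_iff], Or.inl (Or.inl rfl)⟩
    intro x y
    have hx1 := x.2.1; have hx2 := x.2.2
    have hy1 := y.2.1; have hy2 := y.2.2
    have ex : x = ⟨⟨(x : Fin n).val, by omega⟩, ⟨hx1, hx2⟩⟩ := by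
      apply Subtype.ext; apply Fin.ext; rfl
    have ey : y = ⟨⟨(y : Fin n).val, by omega⟩, ⟨hy1, hy2⟩⟩ := by
      apply Subtype.ext; apply Fin.ext; rfl
    rw [ex, ey]
    exact (key _ hx1 hx2).symm.trans (key _ hy1 hy2)
  · exact ⟨⟨⟨a, by omega⟩, ⟨le_refl a, hab⟩⟩⟩

end Aux

section Hard

variable {n r s : ℕ} {plus : Bool}

lemma lemX (hn : 6 ≤ n) (hr : r ≤ n-3) (hs : s ≤ n-3)
    (X Y : Set (Fin n)) (S : Fin 4 → Set (Fin n))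
    (hXc : ((Gnrs n r s plus).induce X).Connected)
    (hYc : ((Gnrs n r s plus).induce Y).Connected)
    (hSc : ∀ j, ((Gnrs n r s plus).induce (S j)).Connected)
    (hXY : Disjoint X Y) (hXS : ∀ j, Disjoint X (S j)) (hYS : ∀ j, Disjoint Y (S j))
    (hSS : ∀ i j, i ≠ j → Disjoint (S i) (S j))
    (hadjX : ∀ j, ∃ v1 ∈ X, ∃ v2 ∈ S j, (Gnrs n r s plus).Adj v1 v2)
    (hadjY : ∀ j, ∃ v1 ∈ Y, ∃ v2 ∈ S j, (Gnrs n r s plus).Adj v1 v2)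
    (hY0 : ∀ v ∈ Y, v.val ≠ 0) (hY1 : ∀ v ∈ Y, v.val ≠ n-1) : False := by
  have hYfree : ∀ v ∈ Y, 1 ≤ v.val ∧ v.val ≤ n-2 := by
    intro v hv; have := hY0 v hv; have := hY1 v hv; have := v.isLt; omega
  have hYne : Y.Nonempty := Set.nonempty_coe_sort.mp hYc.nonempty
  obtain ⟨p, hpY, hpmin⟩ := Set.exists_min_image Y Fin.val (Set.toFinite Y) hYne
  obtain ⟨q, hqY, hqmax⟩ := Set.exists_max_image Y Fin.val (Set.toFinite Y) hYne
  have hpq : p.val ≤ q.val := hpmin q hqY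
  have hpb := hYfree p hpY
  have hqb := hYfree q hqY
  have hYint : ∀ t : Fin n, p.val ≤ t.val → t.val ≤ q.val → t ∈ Y := by
    intro t h1 h2
    exact conn_cover hn hYc hYfree hpY hqY t (by omega) (by omega)
  have hu : ∀ j, ∃ u2 : Fin n, u2 ∈ S j ∧
      (u2.val = 0 ∨ u2.val = n-1 ∨ u2.val + 1 = p.val ∨ u2.val = q.val + 1) := by
    intro j
    obtain ⟨v1, hv1, v2, hv2, hadj⟩ := hadjY j
    refine ⟨v2, hv2, ?_⟩
    have h1 := hYfree v1 hv1
    have hnotin : ¬(p.val ≤ v2.val ∧ v2.val ≤ q.val) := by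
      intro hh
      exact Set.disjoint_left.mp (hYS j) (hYint v2 hh.1 hh.2) hv2
    have hp1 := hpmin v1 hv1
    have hq1 := hqmax v1 hv1
    have := adj_cases hadj
    have := v2.isLt
    omega
  choose u humem huval using hu
  have hune : ∀ i j, i ≠ j → (u i).val ≠ (u j).val := by
    intro i j hij he
    have heq : u i = u j := Fin.ext he
    have h1 := humem i
    rw [heq] at h1
    exact Set.disjoint_left.mp (hSS i j hij) h1 (humem j)
  have h0 := huval 0; have h1 := huval 1; have h2 := huval 2; have h3 := huval 3
  have e01 := hune 0 1 (by decide); have e02 := hune 0 2 (by decide)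
  have e03 := hune 0 3 (by decide); have e12 := hune 1 2 (by decide)
  have e13 := hune 1 3 (by decide); have e23 := hune 2 3 (by decide)
  have hp2 : 2 ≤ p.val := by by_contra hc; push_neg at hc; omega
  have hq2 : q.val ≤ n-3 := by by_contra hc; push_neg at hc; omega
  obtain ⟨jP, hjP⟩ : ∃ j, (u j).val = 0 := by
    by_contra hc; push_neg at hc
    have := hc 0; have := hc 1; have := hc 2; have := hc 3; omega
  obtain ⟨jQ, hjQ⟩ : ∃ j, (u j).val = n-1 := by
    by_contra hc; push_neg at hc
    have := hc 0; have := hc 1; have := hc 2; have := hc 3; omega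
  obtain ⟨ju, hju⟩ : ∃ j, (u j).val + 1 = p.val := by
    by_contra hc; push_neg at hc
    have := hc 0; have := hc 1; have := hc 2; have := hc 3; omega
  obtain ⟨jv, hjv⟩ : ∃ j, (u j).val = q.val + 1 := by
    by_contra hc; push_neg at hc
    have := hc 0; have := hc 1; have := hc 2; have := hc 3; omega
  clear h0 h1 h2 h3 e01 e02 e03 e12 e13 e23 huval hune
  have hjuP : ju ≠ jP := fun e => by rw [e, hjP] at hju; omega
  have hjuQ : ju ≠ jQ := fun e => by rw [e, hjQ] at hju; omega
  have hjvP : jv ≠ jP := fun e => by rw [e, hjP] at hjv; omega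
  have hjvQ : jv ≠ jQ := fun e => by rw [e, hjQ] at hjv; omega
  have hjuv : ju ≠ jv := fun e => by rw [e, hjv] at hju; omega
  -- X is hub-free
  have hX0 : ∀ v ∈ X, v.val ≠ 0 := by
    intro v hv he
    have heq : v = u jP := Fin.ext (by omega)
    rw [heq] at hv
    exact Set.disjoint_left.mp (hXS jP) hv (humem jP)
  have hX1 : ∀ v ∈ X, v.val ≠ n-1 := by
    intro v hv he
    have heq : v = u jQ := Fin.ext (by omega)
    rw [heq] at hv
    exact Set.disjoint_left.mp (hXS jQ) hv (humem jQ)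
  have hXfree : ∀ v ∈ X, 1 ≤ v.val ∧ v.val ≤ n-2 := by
    intro v hv; have := hX0 v hv; have := hX1 v hv; have := v.isLt; omega
  have hXne : X.Nonempty := Set.nonempty_coe_sort.mp hXc.nonempty
  obtain ⟨px, hpxX, hpxmin⟩ := Set.exists_min_image X Fin.val (Set.toFinite X) hXne
  obtain ⟨qx, hqxX, hqxmax⟩ := Set.exists_max_image X Fin.val (Set.toFinite X) hXne
  have hpqx : px.val ≤ qx.val := hpxmin qx hqxX
  have hpxb := hXfree px hpxX
  have hqxb := hXfree qx hqxX
  have hXint : ∀ t : Fin n, px.val ≤ t.val → t.val ≤ qx.val → t ∈ X := by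
    intro t ha hb
    exact conn_cover hn hXc hXfree hpxX hqxX t (by omega) (by omega)
  -- hub-freeness of S j for j ≠ jP, jQ
  have hSfree : ∀ j, j ≠ jP → j ≠ jQ → ∀ v ∈ S j, 1 ≤ v.val ∧ v.val ≤ n-2 := by
    intro j hjp hjq v hv
    have hv0 : v.val ≠ 0 := by
      intro he
      have heq : v = u jP := Fin.ext (by omega)
      rw [heq] at hv
      exact Set.disjoint_left.mp (hSS j jP hjp) hv (humem jP)
    have hv1 : v.val ≠ n-1 := by
      intro he
      have heq : v = u jQ := Fin.ext (by omega)
      rw [heq] at hv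
      exact Set.disjoint_left.mp (hSS j jQ hjq) hv (humem jQ)
    have := v.isLt; omega
  -- attachments of S j to X
  have hatt : ∀ j, j ≠ jP → j ≠ jQ → ∃ w2 : Fin n, w2 ∈ S j ∧
      (w2.val + 1 = px.val ∨ w2.val = qx.val + 1) := by
    intro j hjp hjq
    obtain ⟨v1, hv1, v2, hv2, hadj⟩ := hadjX j
    refine ⟨v2, hv2, ?_⟩
    have hb1 := hXfree v1 hv1
    have hnotin : ¬(px.val ≤ v2.val ∧ v2.val ≤ qx.val) := fun hh =>
      Set.disjoint_left.mp (hXS j) (hXint v2 hh.1 hh.2) hv2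
    have hv20 : v2.val ≠ 0 := by
      intro he
      have heq : v2 = u jP := Fin.ext (by omega)
      rw [heq] at hv2
      exact Set.disjoint_left.mp (hSS j jP hjp) hv2 (humem jP)
    have hv21 : v2.val ≠ n-1 := by
      intro he
      have heq : v2 = u jQ := Fin.ext (by omega)
      rw [heq] at hv2
      exact Set.disjoint_left.mp (hSS j jQ hjq) hv2 (humem jQ)
    have hpx1 := hpxmin v1 hv1
    have hqx1 := hqxmax v1 hv1
    have := adj_cases hadj
    have := v2.isLt
    omega
  obtain ⟨wu, hwuS, hwu⟩ := hatt ju hjuP hjuQ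
  obtain ⟨wv, hwvS, hwv⟩ := hatt jv hjvP hjvQ
  have hwub := hSfree ju hjuP hjuQ wu hwuS
  have hwvb := hSfree jv hjvP hjvQ wv hwvS
  -- ordering of X and Y
  have hord : qx.val < p.val ∨ q.val < px.val := by
    by_contra hc; push_neg at hc
    have hlt : max p.val px.val < n := by omega
    have htY : (⟨max p.val px.val, hlt⟩ : Fin n) ∈ Y := hYint _ (by simp) (by simp; omega)
    have htX : (⟨max p.val px.val, hlt⟩ : Fin n) ∈ X := hXint _ (by simp) (by simp; omega)
    exact Set.disjoint_left.mp hXY htX htY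
  rcases hord with hord | hord
  · -- X left of Y
    rcases hwu with h | h
    · have hmem : px ∈ S ju := conn_cover hn (hSc ju) (hSfree ju hjuP hjuQ) hwuS (humem ju)
        px (by omega) (by omega)
      exact Set.disjoint_left.mp (hXS ju) hpxX hmem
    · rcases hwv with h2 | h2
      · have hmem : px ∈ S jv := conn_cover hn (hSc jv) (hSfree jv hjvP hjvQ) hwvS (humem jv)
          px (by omega) (by omega)
        exact Set.disjoint_left.mp (hXS jv) hpxX hmem
      · have heq : wu = wv := Fin.ext (by omega)
        rw [heq] at hwuS
        exact Set.disjoint_left.mp (hSS ju jv hjuv) hwuS hwvS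
  · -- Y left of X
    rcases hwv with h | h
    · rcases hwu with h2 | h2
      · have heq : wu = wv := Fin.ext (by omega)
        rw [heq] at hwuS
        exact Set.disjoint_left.mp (hSS ju jv hjuv) hwuS hwvS
      · have hmem : px ∈ S ju := conn_cover hn (hSc ju) (hSfree ju hjuP hjuQ) hwuS (humem ju)
          px (by omega) (by omega)
        exact Set.disjoint_left.mp (hXS ju) hpxX hmem
    · have hmem : px ∈ S jv := conn_cover hn (hSc jv) (hSfree jv hjvP hjvQ) hwvS (humem jv)
        px (by omega) (by omega)
      exact Set.disjoint_left.mp (hXS jv) hpxX hmem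

end Hard

section Hard2

variable {n r s : ℕ} {plus : Bool}

lemma pigeon4 (P Q : Fin 4 → Prop)
    (hP : ∀ i j, i ≠ j → ¬ P i → ¬ P j → False)
    (hQ : ∀ i j, i ≠ j → ¬ Q i → ¬ Q j → False) :
    ∃ i j, i ≠ j ∧ P i ∧ Q i ∧ P j ∧ Q j := by
  by_cases p0 : P 0 <;> by_cases p1 : P 1 <;> by_cases p2 : P 2 <;> by_cases p3 : P 3 <;>
    by_cases q0 : Q 0 <;> by_cases q1 : Q 1 <;> by_cases q2 : Q 2 <;> by_cases q3 : Q 3 <;>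
    first
      | exact (hP 0 1 (by decide) (by assumption) (by assumption)).elim
      | exact (hP 0 2 (by decide) (by assumption) (by assumption)).elim
      | exact (hP 0 3 (by decide) (by assumption) (by assumption)).elim
      | exact (hP 1 2 (by decide) (by assumption) (by assumption)).elim
      | exact (hP 1 3 (by decide) (by assumption) (by assumption)).elim
      | exact (hP 2 3 (by decide) (by assumption) (by assumption)).elim
      | exact (hQ 0 1 (by decide) (by assumption) (by assumption)).elim
      | exact (hQ 0 2 (by decide) (by assumption) (by assumption)).elim
      | exact (hQ 0 3 (by decide) (by assumption) (by assumption)).elim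
      | exact (hQ 1 2 (by decide) (by assumption) (by assumption)).elim
      | exact (hQ 1 3 (by decide) (by assumption) (by assumption)).elim
      | exact (hQ 2 3 (by decide) (by assumption) (by assumption)).elim
      | exact ⟨0, 1, by decide, by assumption, by assumption, by assumption, by assumption⟩
      | exact ⟨0, 2, by decide, by assumption, by assumption, by assumption, by assumption⟩
      | exact ⟨0, 3, by decide, by assumption, by assumption, by assumption, by assumption⟩
      | exact ⟨1, 2, by decide, by assumption, by assumption, by assumption, by assumption⟩
      | exact ⟨1, 3, by decide, by assumption, by assumption, by assumption, by assumption⟩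
      | exact ⟨2, 3, by decide, by assumption, by assumption, by assumption, by assumption⟩

lemma mainLem (hn : 6 ≤ n) (hr : r ≤ n-3) (hs : s ≤ n-3) (hrs : r + s ≤ n-1)
    (X Y : Set (Fin n)) (S : Fin 4 → Set (Fin n))
    (hXc : ((Gnrs n r s plus).induce X).Connected)
    (hYc : ((Gnrs n r s plus).induce Y).Connected)
    (hSc : ∀ j, ((Gnrs n r s plus).induce (S j)).Connected)
    (hXY : Disjoint X Y) (hXS : ∀ j, Disjoint X (S j)) (hYS : ∀ j, Disjoint Y (S j))
    (hSS : ∀ i j, i ≠ j → Disjoint (S i) (S j))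
    (hadjX : ∀ j, ∃ v1 ∈ X, ∃ v2 ∈ S j, (Gnrs n r s plus).Adj v1 v2)
    (hadjY : ∀ j, ∃ v1 ∈ Y, ∃ v2 ∈ S j, (Gnrs n r s plus).Adj v1 v2)
    (h0X : ∀ v : Fin n, v.val = 0 → v ∈ X) (h1Y : ∀ v : Fin n, v.val = n-1 → v ∈ Y) :
    False := by
  have hsm : s ≤ n-1-r := by omega
  obtain ⟨z0, hz0v⟩ : ∃ z : Fin n, z.val = 0 := ⟨⟨0, by omega⟩, rfl⟩
  obtain ⟨z1, hz1v⟩ : ∃ z : Fin n, z.val = n-1 := ⟨⟨n-1, by omega⟩, rfl⟩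
  have hz0X : z0 ∈ X := h0X z0 hz0v
  have hz1Y : z1 ∈ Y := h1Y z1 hz1v
  have hSfree : ∀ j, ∀ v ∈ S j, 1 ≤ v.val ∧ v.val ≤ n-2 := by
    intro j v hv
    have hv0 : v.val ≠ 0 := by
      intro he
      have heq : v = z0 := Fin.ext (by omega)
      rw [heq] at hv
      exact Set.disjoint_left.mp (hXS j) hz0X hv
    have hv1 : v.val ≠ n-1 := by
      intro he
      have heq : v = z1 := Fin.ext (by omega)
      rw [heq] at hv
      exact Set.disjoint_left.mp (hYS j) hz1Y hv
    have := v.isLt; omega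
  have hbnds : ∀ j, ∃ xj, xj ∈ S j ∧ ∃ yj, yj ∈ S j ∧
      ∀ v ∈ S j, xj.val ≤ v.val ∧ v.val ≤ yj.val := by
    intro j
    have hne : (S j).Nonempty := Set.nonempty_coe_sort.mp (hSc j).nonempty
    obtain ⟨xx, hx, hxm⟩ := Set.exists_min_image (S j) Fin.val (Set.toFinite _) hne
    obtain ⟨yy, hy, hym⟩ := Set.exists_max_image (S j) Fin.val (Set.toFinite _) hne
    exact ⟨xx, hx, yy, hy, fun v hv => ⟨hxm v hv, hym v hv⟩⟩
  choose x hxmem y hymem hbound using hbnds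
  have hSint : ∀ j (t : Fin n), (x j).val ≤ t.val → t.val ≤ (y j).val → t ∈ S j := by
    intro j t ht1 ht2
    have hxy := (hbound j (x j) (hxmem j)).2
    exact conn_cover hn (hSc j) (hSfree j) (hxmem j) (hymem j) t (by omega) (by omega)
  -- routes to z1 through Y
  have hYfree' : ∀ v ∈ Y, v ≠ z1 → 1 ≤ v.val ∧ v.val ≤ n-2 := by
    intro v hv hne
    have hv0 : v.val ≠ 0 := by
      intro he
      have heq : v = z0 := Fin.ext (by omega)
      rw [heq] at hv
      exact Set.disjoint_left.mp hXY hz0X hv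
    have hv1 : v.val ≠ n-1 := fun he => hne (Fin.ext (by omega))
    have := v.isLt; omega
  have hXfree' : ∀ v ∈ X, v ≠ z0 → 1 ≤ v.val ∧ v.val ≤ n-2 := by
    intro v hv hne
    have hv1 : v.val ≠ n-1 := by
      intro he
      have heq : v = z1 := Fin.ext (by omega)
      rw [heq] at hv
      exact Set.disjoint_left.mp hXY hv hz1Y
    have hv0 : v.val ≠ 0 := fun he => hne (Fin.ext (by omega))
    have := v.isLt; omega
  have hroutesB : ∀ j, ∃ c : ℕ, 1 ≤ c ∧ c ≤ n-2 ∧ (c ≤ s ∨ c = n-2) ∧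
      ∀ t : Fin n, ((c ≤ t.val ∧ t.val + 1 ≤ (x j).val) ∨
        ((y j).val + 1 ≤ t.val ∧ t.val ≤ c)) → t ∈ Y := by
    intro j
    obtain ⟨v1, hv1, v2, hv2, hadj⟩ := hadjY j
    have hv2b := hSfree j v2 hv2
    have hxy2 := hbound j v2 hv2
    by_cases hv1z : v1 = z1
    · rw [hv1z] at hadj
      have hdec := adj_to_last hn hz1v hadj.symm hv2b.1 hv2b.2
      exact ⟨v2.val, hv2b.1, hv2b.2, hdec, fun t ht => absurd ht (by omega)⟩
    · have hv1b := hYfree' v1 hv1 hv1z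
      have hnotin : ¬((x j).val ≤ v1.val ∧ v1.val ≤ (y j).val) := fun hh =>
        Set.disjoint_left.mp (hYS j) hv1 (hSint j v1 hh.1 hh.2)
      have hstep : v1.val + 1 = v2.val ∨ v2.val + 1 = v1.val := by
        have := adj_cases hadj; omega
      have hpos : v1.val + 1 = (x j).val ∨ v1.val = (y j).val + 1 := by omega
      obtain ⟨P⟩ := hYc.preconnected ⟨v1, hv1⟩ ⟨z1, hz1Y⟩
      obtain ⟨c, hcY, hcz, hcadj, hcov⟩ := reach_hub hn hYfree' P rfl hv1z
      have hcb := hYfree' c hcY hcz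
      have hdec := adj_to_last hn hz1v hcadj hcb.1 hcb.2
      refine ⟨c.val, hcb.1, hcb.2, hdec, ?_⟩
      intro t ht
      have hxyj := (hbound j (x j) (hxmem j)).2
      have hveq : ((⟨v1, hv1⟩ : ↥Y) : Fin n).val = v1.val := rfl
      exact hcov t (by omega) (by omega)
  have hroutesA : ∀ j, ∃ d : ℕ, 1 ≤ d ∧ d ≤ n-2 ∧ (d = 1 ∨ n-1-r ≤ d) ∧
      ∀ t : Fin n, ((d ≤ t.val ∧ t.val + 1 ≤ (x j).val) ∨
        ((y j).val + 1 ≤ t.val ∧ t.val ≤ d)) → t ∈ X := by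
    intro j
    obtain ⟨v1, hv1, v2, hv2, hadj⟩ := hadjX j
    have hv2b := hSfree j v2 hv2
    have hxy2 := hbound j v2 hv2
    by_cases hv1z : v1 = z0
    · rw [hv1z] at hadj
      have hdec := adj_to_zero hn hz0v hadj.symm hv2b.1 hv2b.2
      refine ⟨v2.val, hv2b.1, hv2b.2, by omega, fun t ht => absurd ht (by omega)⟩
    · have hv1b := hXfree' v1 hv1 hv1z
      have hnotin : ¬((x j).val ≤ v1.val ∧ v1.val ≤ (y j).val) := fun hh =>
        Set.disjoint_left.mp (hXS j) hv1 (hSint j v1 hh.1 hh.2)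
      have hstep : v1.val + 1 = v2.val ∨ v2.val + 1 = v1.val := by
        have := adj_cases hadj; omega
      have hpos : v1.val + 1 = (x j).val ∨ v1.val = (y j).val + 1 := by omega
      obtain ⟨P⟩ := hXc.preconnected ⟨v1, hv1⟩ ⟨z0, hz0X⟩
      obtain ⟨c, hcX, hcz, hcadj, hcov⟩ := reach_hub hn hXfree' P rfl hv1z
      have hcb := hXfree' c hcX hcz
      have hdec := adj_to_zero hn hz0v hcadj hcb.1 hcb.2
      refine ⟨c.val, hcb.1, hcb.2, by omega, ?_⟩
      intro t ht
      have hxyj := (hbound j (x j) (hxmem j)).2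
      have hveq : ((⟨v1, hv1⟩ : ↥X) : Fin n).val = v1.val := rfl
      exact hcov t (by omega) (by omega)
  choose c hc1 hc2 hc3 hcg using hroutesB
  choose d hd1 hd2 hd3 hdg using hroutesA
  have ordSS : ∀ i j, i ≠ j → (y i).val < (x j).val ∨ (y j).val < (x i).val := by
    intro i j hij
    by_contra hcon; push_neg at hcon
    have hxyi := (hbound i (x i) (hxmem i)).2
    have hxyj := (hbound j (x j) (hxmem j)).2
    have hbi := hSfree i (y i) (hymem i)
    have hlt : max (x i).val (x j).val < n := by omega
    have hti : (⟨max (x i).val (x j).val, hlt⟩ : Fin n) ∈ S i := hSint i _ (by simp) (by simp; omega)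
    have htj : (⟨max (x i).val (x j).val, hlt⟩ : Fin n) ∈ S j := hSint j _ (by simp) (by simp; omega)
    exact Set.disjoint_left.mp (hSS i j hij) hti htj
  have claim1 : ∀ i j, i ≠ j → c i = n-2 → c j = n-2 → False := by
    intro i j hij hci hcj
    have hbxj := hSfree j (x j) (hxmem j)
    have hbxi := hSfree i (x i) (hxmem i)
    rcases ordSS i j hij with h | h
    · have hmem : (x j) ∈ Y := hcg i (x j) (Or.inr ⟨by omega, by omega⟩)
      exact Set.disjoint_left.mp (hYS j) hmem (hxmem j)
    · have hmem : (x i) ∈ Y := hcg j (x i) (Or.inr ⟨by omega, by omega⟩)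
      exact Set.disjoint_left.mp (hYS i) hmem (hxmem i)
  have claim2 : ∀ i j, i ≠ j → d i = 1 → d j = 1 → False := by
    intro i j hij hdi hdj
    have hbyi := hSfree i (y i) (hymem i)
    have hbyj := hSfree j (y j) (hymem j)
    rcases ordSS i j hij with h | h
    · have hmem : (y i) ∈ X := hdg j (y i) (Or.inl ⟨by omega, by omega⟩)
      exact Set.disjoint_left.mp (hXS i) hmem (hymem i)
    · have hmem : (y j) ∈ X := hdg i (y j) (Or.inl ⟨by omega, by omega⟩)
      exact Set.disjoint_left.mp (hXS j) hmem (hymem j)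
  obtain ⟨jj, kk, hjk, hPj, hQj, hPk, hQk⟩ :=
    pigeon4 (fun j => c j ≤ s) (fun j => n-1-r ≤ d j)
      (fun i j hij hi hj => claim1 i j hij (by have := hc3 i; omega) (by have := hc3 j; omega))
      (fun i j hij hi hj => claim2 i j hij (by have := hd3 i; omega) (by have := hd3 j; omega))
  have final : ∀ j k, j ≠ k → (y j).val < (x k).val → c j ≤ s → c k ≤ s →
      n-1-r ≤ d j → n-1-r ≤ d k → False := by
    intro j k hjk hord hcj hck hdj hdk
    have hbyj := hSfree j (y j) (hymem j)
    have hbxk := hSfree k (x k) (hxmem k)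
    have hxyj := (hbound j (x j) (hxmem j)).2
    have hxyk := (hbound k (x k) (hxmem k)).2
    have hck2 := hc2 k
    have hck1 := hc1 k
    have hdj2 := hd2 j
    by_cases hdjy : d j ≤ (y j).val
    · have hmem : (y j) ∈ Y := hcg k (y j) (Or.inl ⟨by omega, by omega⟩)
      exact Set.disjoint_left.mp (hYS j) hmem (hymem j)
    · push_neg at hdjy
      by_cases hckx : (x k).val ≤ c k
      · have hmem : (x k) ∈ X := hdg j (x k) (Or.inr ⟨by omega, by omega⟩)
        exact Set.disjoint_left.mp (hXS k) hmem (hxmem k)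
      · push_neg at hckx
        by_cases hcky : c k ≤ (y j).val
        · have hmem : (y j) ∈ Y := hcg k (y j) (Or.inl ⟨by omega, by omega⟩)
          exact Set.disjoint_left.mp (hYS j) hmem (hymem j)
        · push_neg at hcky
          have hlt : c k < n := by omega
          have hzeq : (⟨c k, hlt⟩ : Fin n).val = c k := rfl
          have hmX : (⟨c k, hlt⟩ : Fin n) ∈ X := hdg j _ (Or.inr ⟨by omega, by omega⟩)
          have hmY : (⟨c k, hlt⟩ : Fin n) ∈ Y := hcg k _ (Or.inl ⟨by omega, by omega⟩)
          exact Set.disjoint_left.mp hXY hmX hmY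
  rcases ordSS jj kk hjk with h | h
  · exact final jj kk hjk h hPj hPk hQj hQk
  · exact final kk jj (Ne.symm hjk) h hPk hPj hQk hQj

end Hard2
section Glue

variable {n r s : ℕ} {plus : Bool}

lemma mem_mk {L U a : ℕ} {ha : a < n} (h1 : L ≤ a) (h2 : a ≤ U) :
    (⟨a, ha⟩ : Fin n) ∈ {v : Fin n | L ≤ v.val ∧ v.val ≤ U} := ⟨h1, h2⟩

lemma adj_mk {a b : ℕ} {ha : a < n} {hb : b < n} (hne : a ≠ b)
    (h : b = a + 1 ∨ a = b + 1 ∨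
      (a = 0 ∧ n-1-r ≤ b ∧ b ≤ n-2) ∨ (b = 0 ∧ n-1-r ≤ a ∧ a ≤ n-2) ∨
      (a = n-1 ∧ 1 ≤ b ∧ b ≤ s) ∨ (b = n-1 ∧ 1 ≤ a ∧ a ≤ s)) :
    (Gnrs n r s plus).Adj ⟨a, ha⟩ ⟨b, hb⟩ := adj_of hne h

lemma key (hn : 6 ≤ n) (hr : r ≤ n-3) (hs : s ≤ n-3) (hrs : r + s ≤ n-1)
    (X Y : Set (Fin n)) (S : Fin 4 → Set (Fin n))
    (hXc : ((Gnrs n r s plus).induce X).Connected)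
    (hYc : ((Gnrs n r s plus).induce Y).Connected)
    (hSc : ∀ j, ((Gnrs n r s plus).induce (S j)).Connected)
    (hXY : Disjoint X Y) (hXS : ∀ j, Disjoint X (S j)) (hYS : ∀ j, Disjoint Y (S j))
    (hSS : ∀ i j, i ≠ j → Disjoint (S i) (S j))
    (hadjX : ∀ j, ∃ v1 ∈ X, ∃ v2 ∈ S j, (Gnrs n r s plus).Adj v1 v2)
    (hadjY : ∀ j, ∃ v1 ∈ Y, ∃ v2 ∈ S j, (Gnrs n r s plus).Adj v1 v2) : False := by
  by_cases h0X : ∃ v ∈ X, v.val = 0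
  · by_cases h1Y : ∃ v ∈ Y, v.val = n-1
    · obtain ⟨w0, hw0, hw0v⟩ := h0X
      obtain ⟨w1, hw1, hw1v⟩ := h1Y
      exact mainLem hn hr hs hrs X Y S hXc hYc hSc hXY hXS hYS hSS hadjX hadjY
        (fun v hv => by have : v = w0 := Fin.ext (by omega); rw [this]; exact hw0)
        (fun v hv => by have : v = w1 := Fin.ext (by omega); rw [this]; exact hw1)
    · -- Y hub-free
      obtain ⟨w0, hw0, hw0v⟩ := h0X
      refine lemX hn hr hs X Y S hXc hYc hSc hXY hXS hYS hSS hadjX hadjY ?_ ?_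
      · intro v hv he
        have : v = w0 := Fin.ext (by omega)
        rw [this] at hv
        exact Set.disjoint_left.mp hXY hw0 hv
      · intro v hv he
        exact h1Y ⟨v, hv, he⟩
  · by_cases h0Y : ∃ v ∈ Y, v.val = 0
    · by_cases h1X : ∃ v ∈ X, v.val = n-1
      · obtain ⟨w0, hw0, hw0v⟩ := h0Y
        obtain ⟨w1, hw1, hw1v⟩ := h1X
        exact mainLem hn hr hs hrs Y X S hYc hXc hSc hXY.symm hYS hXS hSS hadjY hadjX
          (fun v hv => by have : v = w0 := Fin.ext (by omega); rw [this]; exact hw0)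
          (fun v hv => by have : v = w1 := Fin.ext (by omega); rw [this]; exact hw1)
      · -- X hub-free
        refine lemX hn hr hs Y X S hYc hXc hSc hXY.symm hYS hXS hSS hadjY hadjX ?_ ?_
        · intro v hv he
          exact h0X ⟨v, hv, he⟩
        · intro v hv he
          exact h1X ⟨v, hv, he⟩
    · by_cases h1Y : ∃ v ∈ Y, v.val = n-1
      · -- X hub-free: 0 ∉ X, and n-1 ∈ Y so n-1 ∉ X
        obtain ⟨w1, hw1, hw1v⟩ := h1Y
        refine lemX hn hr hs Y X S hYc hXc hSc hXY.symm hYS hXS hSS hadjY hadjX ?_ ?_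
        · intro v hv he
          exact h0X ⟨v, hv, he⟩
        · intro v hv he
          have : v = w1 := Fin.ext (by omega)
          rw [this] at hv
          exact Set.disjoint_left.mp hXY hv hw1
      · -- Y hub-free
        refine lemX hn hr hs X Y S hXc hYc hSc hXY hXS hYS hSS hadjX hadjY ?_ ?_
        · intro v hv he
          exact h0Y ⟨v, hv, he⟩
        · intro v hv he
          exact h1Y ⟨v, hv, he⟩

lemma no_minor (hn : 6 ≤ n) (hr : r ≤ n - 3) (hs : s ≤ n - 3) (hrs : r + s ≤ n - 1) :
    ¬ IsMinor K24 (Gnrs n r s plus) := by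
  rintro ⟨B, hconn, hdisj, hadj⟩
  have hK : ∀ (i : Fin 2) (j : Fin 4), K24.Adj (Sum.inl i) (Sum.inr j) := by
    intro i j
    simp [K24]
  exact key hn hr hs hrs (B (Sum.inl 0)) (B (Sum.inl 1)) (fun j => B (Sum.inr j))
    (hconn _) (hconn _) (fun j => hconn _)
    (hdisj _ _ (by decide))
    (fun j => hdisj _ _ (by simp))
    (fun j => hdisj _ _ (by simp))
    (fun i j hij => hdisj _ _ (fun h => hij (by injection h)))
    (fun j => hadj _ _ (hK 0 j)) (fun j => hadj _ _ (hK 1 j))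

lemma minor_of_large (hn : 6 ≤ n) (hr : r ≤ n - 3) (hs : s ≤ n - 3) (hrs : n ≤ r + s) :
    IsMinor K24 (Gnrs n r s plus) := by
  have hr3 : 3 ≤ r := by omega
  have hs3 : 3 ≤ s := by omega
  refine ⟨fun w =>
    match w with
    | Sum.inl 0 => {v : Fin n | 0 ≤ v.val ∧ v.val ≤ 0}
    | Sum.inl 1 => {v : Fin n | n-1 ≤ v.val ∧ v.val ≤ n-1}
    | Sum.inr 0 => {v : Fin n | 1 ≤ v.val ∧ v.val ≤ n-2-r}
    | Sum.inr 1 => {v : Fin n | n-1-r ≤ v.val ∧ v.val ≤ n-1-r}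
    | Sum.inr 2 => {v : Fin n | n-r ≤ v.val ∧ v.val ≤ n-r}
    | Sum.inr 3 => {v : Fin n | n-r+1 ≤ v.val ∧ v.val ≤ n-2}, ?_, ?_, ?_⟩
  · rintro (i | j)
    · fin_cases i
      · exact interval_connected hn 0 0 le_rfl (by omega)
      · exact interval_connected hn (n-1) (n-1) le_rfl (by omega)
    · fin_cases j
      · exact interval_connected hn 1 (n-2-r) (by omega) (by omega)
      · exact interval_connected hn (n-1-r) (n-1-r) le_rfl (by omega)
      · exact interval_connected hn (n-r) (n-r) le_rfl (by omega)
      · exact interval_connected hn (n-r+1) (n-2) (by omega) (by omega)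
  · rintro (i | i) (j | j) hne <;> fin_cases i <;> fin_cases j <;>
      first
        | exact absurd rfl hne
        | (rw [Set.disjoint_left]
           intro a ha hb
           have h1 := ha.1
           have h2 := ha.2
           have h3 := hb.1
           have h4 := hb.2
           omega)
  · intro w1 w2 hadj
    rcases w1 with i | i <;> rcases w2 with j | j
    · exact absurd hadj (by simp [K24])
    · fin_cases i <;> fin_cases j
      · exact ⟨⟨0, by omega⟩, mem_mk (by omega) (by omega), ⟨1, by omega⟩, mem_mk (by omega) (by omega),
          adj_mk (by omega) (by omega)⟩
      · exact ⟨⟨0, by omega⟩, mem_mk (by omega) (by omega), ⟨n-1-r, by omega⟩, mem_mk (by omega) (by omega),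
          adj_mk (by omega) (by omega)⟩
      · exact ⟨⟨0, by omega⟩, mem_mk (by omega) (by omega), ⟨n-r, by omega⟩, mem_mk (by omega) (by omega),
          adj_mk (by omega) (by omega)⟩
      · exact ⟨⟨0, by omega⟩, mem_mk (by omega) (by omega), ⟨n-2, by omega⟩, mem_mk (by omega) (by omega),
          adj_mk (by omega) (by omega)⟩
      · exact ⟨⟨n-1, by omega⟩, mem_mk (by omega) (by omega), ⟨1, by omega⟩, mem_mk (by omega) (by omega),
          adj_mk (by omega) (by omega)⟩
      · exact ⟨⟨n-1, by omega⟩, mem_mk (by omega) (by omega), ⟨n-1-r, by omega⟩, mem_mk (by omega) (by omega),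
          adj_mk (by omega) (by omega)⟩
      · exact ⟨⟨n-1, by omega⟩, mem_mk (by omega) (by omega), ⟨n-r, by omega⟩, mem_mk (by omega) (by omega),
          adj_mk (by omega) (by omega)⟩
      · exact ⟨⟨n-1, by omega⟩, mem_mk (by omega) (by omega), ⟨n-2, by omega⟩, mem_mk (by omega) (by omega),
          adj_mk (by omega) (by omega)⟩
    · fin_cases i <;> fin_cases j
      · exact ⟨⟨1, by omega⟩, mem_mk (by omega) (by omega), ⟨0, by omega⟩, mem_mk (by omega) (by omega),
          adj_mk (by omega) (by omega)⟩
      · exact ⟨⟨1, by omega⟩, mem_mk (by omega) (by omega), ⟨n-1, by omega⟩, mem_mk (by omega) (by omega),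
          adj_mk (by omega) (by omega)⟩
      · exact ⟨⟨n-1-r, by omega⟩, mem_mk (by omega) (by omega), ⟨0, by omega⟩, mem_mk (by omega) (by omega),
          adj_mk (by omega) (by omega)⟩
      · exact ⟨⟨n-1-r, by omega⟩, mem_mk (by omega) (by omega), ⟨n-1, by omega⟩, mem_mk (by omega) (by omega),
          adj_mk (by omega) (by omega)⟩
      · exact ⟨⟨n-r, by omega⟩, mem_mk (by omega) (by omega), ⟨0, by omega⟩, mem_mk (by omega) (by omega),
          adj_mk (by omega) (by omega)⟩
      · exact ⟨⟨n-r, by omega⟩, mem_mk (by omega) (by omega), ⟨n-1, by omega⟩, mem_mk (by omega) (by omega),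
          adj_mk (by omega) (by omega)⟩
      · exact ⟨⟨n-2, by omega⟩, mem_mk (by omega) (by omega), ⟨0, by omega⟩, mem_mk (by omega) (by omega),
          adj_mk (by omega) (by omega)⟩
      · exact ⟨⟨n-2, by omega⟩, mem_mk (by omega) (by omega), ⟨n-1, by omega⟩, mem_mk (by omega) (by omega),
          adj_mk (by omega) (by omega)⟩
    · exact absurd hadj (by simp [K24])

end Glue

/-- Lemma 2: for `n ≥ 6` and `r, s ∈ {0, …, n-3}`, the graph
`G^{(+)}_{n,r,s}` is `K_{2,4}`-minor-free iff `r + s ≤ n - 1`. -/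
theorem Gnrs_K24MinorFree_iff (n r s : ℕ) (plus : Bool)
    (hn : 6 ≤ n) (hr : r ≤ n - 3) (hs : s ≤ n - 3) :
    MinorFree K24 (Gnrs n r s plus) ↔ r + s ≤ n - 1 := by
  constructor
  · intro h
    by_contra hc
    exact h (minor_of_large hn hr hs (by omega))
  · intro h hm
    exact no_minor hn hr hs h hm

end K24Paper
end

section
/- If H is a 3-connected graph that is a minor of a graph G belonging to 𝒢̃, then H belongs to 𝒢̃. -/
namespace K24Paper

open SimpleGraph

lemma induce_iso_img {V V' : Type*} {G : SimpleGraph V} {G' : SimpleGraph V'} (e : G ≃g G') (S : Set V) :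
    Nonempty (G.induce S ≃g G'.induce (⇑e '' S)) := by
  refine ⟨⟨Equiv.Set.image (⇑e) S e.toEquiv.injective, ?_⟩⟩
  intro a b
  simp only [Equiv.Set.image_apply, comap_adj, Function.Embedding.coe_subtype]
  exact e.map_rel_iff


lemma isMinor_iso {V V' W : Type*} {H : SimpleGraph W} {G : SimpleGraph V} {G' : SimpleGraph V'}
    (e : G ≃g G') (h : IsMinor H G) : IsMinor H G' := by
  obtain ⟨B, hconn, hdisj, hedge⟩ := h
  refine ⟨fun w => ⇑e '' B w, fun w => ?_, fun w₁ w₂ hne => ?_, fun w₁ w₂ hadj => ?_⟩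
  · obtain ⟨i⟩ := induce_iso_img e (B w)
    exact i.connected_iff.mp (hconn w)
  · exact Set.disjoint_image_of_injective e.toEquiv.injective (hdisj w₁ w₂ hne)
  · obtain ⟨v₁, h₁, v₂, h₂, hadj'⟩ := hedge w₁ w₂ hadj
    exact ⟨e v₁, ⟨v₁, h₁, rfl⟩, e v₂, ⟨v₂, h₂, rfl⟩, e.map_rel_iff.mpr hadj'⟩


lemma exists_cross_edge {W : Type*} {H : SimpleGraph W} {A X : Set W}
    (hconn : (H.induce A).Connected) (hXA : X ⊆ A) {x₀ y₀ : W}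
    (hx : x₀ ∈ X) (hy : y₀ ∈ A) (hyX : y₀ ∉ X) :
    ∃ u ∈ X, ∃ v ∈ A, v ∉ X ∧ H.Adj u v := by
  suffices h : ∀ (a b : ↥A), (H.induce A).Walk a b → (a : W) ∈ X → (b : W) ∉ X →
      ∃ u ∈ X, ∃ v ∈ A, v ∉ X ∧ H.Adj u v by
    obtain ⟨wlk⟩ := hconn.preconnected ⟨x₀, hXA hx⟩ ⟨y₀, hy⟩
    exact h _ _ wlk hx hyX
  intro a b wlk
  induction wlk with
  | nil => exact fun ha hb => absurd ha hb
  | @cons a c b h p ih =>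
    intro ha hb
    by_cases hc : (c : W) ∈ X
    · exact ih hc hb
    · exact ⟨a, ha, c, c.2, hc, by simpa only [comap_adj, Function.Embedding.coe_subtype] using h⟩


lemma kconn_no_two_cover {W : Type*} [Finite W] {H : SimpleGraph W} (hH : KConnected 3 H)
    (w x y : W) (hcov : ∀ w', H.Adj w w' → w' = x ∨ w' = y) : False := by
  have hcard : 3 < Nat.card W := hH.1
  set S : Set W := {x, y} \ {w} with hSdef
  have hS2 : S.ncard ≤ 2 := by
    refine le_trans (Set.ncard_le_ncard Set.diff_subset (Set.toFinite _)) ?_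
    refine le_trans (Set.ncard_insert_le _ _) ?_
    simp [Set.ncard_singleton]
  have conn := hH.2 S (by omega)
  have hwS : w ∈ Sᶜ := by simp [hSdef]
  have hcompl : 1 < (Sᶜ).ncard := by
    have := Set.ncard_add_ncard_compl S
    omega
  obtain ⟨z, hz, hzw⟩ := Set.exists_ne_of_one_lt_ncard hcompl w
  obtain ⟨u, hu, v, hv, hvX, hadj⟩ :=
    exists_cross_edge (X := {w}) conn (by simpa using hwS) rfl hz (by simpa using hzw)
  rw [Set.mem_singleton_iff] at hu
  subst hu
  have hvxy : v = x ∨ v = y := hcov v hadj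
  have : v ∈ S := ⟨by rcases hvxy with rfl | rfl <;> simp, by simpa using hvX⟩
  exact hv this


lemma gnrs_adj {n r s : ℕ} {plus : Bool} (u v : Fin n) :
    (Gnrs n r s plus).Adj u v ↔ u ≠ v ∧
      ((v.val = u.val + 1 ∨ (u.val = 0 ∧ n-1-r ≤ v.val ∧ v.val ≤ n-2) ∨
        (v.val = n-1 ∧ 1 ≤ u.val ∧ u.val ≤ s) ∨ (plus = true ∧ u.val = 0 ∧ v.val = n-1)) ∨
       (u.val = v.val + 1 ∨ (v.val = 0 ∧ n-1-r ≤ u.val ∧ u.val ≤ n-2) ∨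
        (u.val = n-1 ∧ 1 ≤ v.val ∧ v.val ≤ s) ∨ (plus = true ∧ v.val = 0 ∧ u.val = n-1))) :=
  SimpleGraph.fromRel_adj _ u v


lemma gnrs_adj_internal {n r s : ℕ} {plus : Bool} {u v : Fin n}
    (h : (Gnrs n r s plus).Adj u v) (hu1 : 1 ≤ u.val) (hu2 : u.val ≤ n-2)
    (hv1 : 1 ≤ v.val) (hv2 : v.val ≤ n-2) (hn : 4 ≤ n) :
    v.val = u.val + 1 ∨ u.val = v.val + 1 := by
  rw [gnrs_adj] at h
  obtain ⟨hne, h | h⟩ := h <;>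
    rcases h with h | ⟨h1, h2, h3⟩ | ⟨h1, h2, h3⟩ | ⟨hb, h1, h2⟩ <;> omega


lemma gnrs_adj_hub0 {n r s : ℕ} {plus : Bool} {u v : Fin n} (hn : 4 ≤ n) (hu : u.val = 0)
    (h : (Gnrs n r s plus).Adj u v) (hv2 : v.val ≤ n-2) :
    v.val = 1 ∨ n-1-r ≤ v.val := by
  rw [gnrs_adj] at h
  obtain ⟨hne, h | h⟩ := h <;>
    rcases h with h | ⟨h1, h2, h3⟩ | ⟨h1, h2, h3⟩ | ⟨hb, h1, h2⟩ <;> omega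


lemma gnrs_adj_hub1 {n r s : ℕ} {plus : Bool} {u v : Fin n} (hn : 4 ≤ n) (hu : u.val = n-1)
    (h : (Gnrs n r s plus).Adj u v) (hv1 : 1 ≤ v.val) (hv2 : v.val ≤ n-2) :
    v.val ≤ s ∨ v.val = n-2 := by
  rw [gnrs_adj] at h
  obtain ⟨hne, h | h⟩ := h <;>
    rcases h with h | ⟨h1, h2, h3⟩ | ⟨h1, h2, h3⟩ | ⟨hb, h1, h2⟩ <;> omega



lemma interval_of_connected {n r s : ℕ} {plus : Bool} (hn : 4 ≤ n) {B : Set (Fin n)}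
    (hconn : ((Gnrs n r s plus).induce B).Connected)
    (h0 : ∀ v ∈ B, v.val ≠ 0) (h1 : ∀ v ∈ B, v.val ≠ n-1) :
    ∃ a b : ℕ, 1 ≤ a ∧ a ≤ b ∧ b ≤ n-2 ∧ ∀ v : Fin n, v ∈ B ↔ (a ≤ v.val ∧ v.val ≤ b) := by
  have hne : B.Nonempty := by
    obtain ⟨⟨v, hv⟩⟩ := hconn.nonempty
    exact ⟨v, hv⟩
  have hint : ∀ v ∈ B, 1 ≤ v.val ∧ v.val ≤ n-2 := by
    intro v hv
    have := h0 v hv; have := h1 v hv; have := v.isLt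
    omega
  have hbetween : ∀ (x y : ↥B), ∀ t : ℕ, (x : Fin n).val ≤ t → t ≤ (y : Fin n).val →
      ∃ v ∈ B, v.val = t := by
    intro x y
    obtain ⟨wlk⟩ := hconn.preconnected x y
    induction wlk with
    | @nil a => exact fun t h1 h2 => ⟨a, a.2, by omega⟩
    | @cons a c b h p ih =>
      intro t ht1 ht2
      have hadj : (Gnrs n r s plus).Adj a c := by
        simpa only [comap_adj, Function.Embedding.coe_subtype] using h
      have hstep := gnrs_adj_internal hadj (hint _ a.2).1 (hint _ a.2).2 (hint _ c.2).1
        (hint _ c.2).2 hn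
      by_cases hcase : t ≤ (a : Fin n).val
      · exact ⟨a, a.2, by omega⟩
      · exact ih t (by omega) ht2
  set N : Set ℕ := Fin.val '' B with hN
  have hNne : N.Nonempty := hne.image _
  have hNbdd : BddAbove N := ⟨n, by rintro t ⟨v, hv, rfl⟩; exact le_of_lt v.isLt⟩
  obtain ⟨x, hxB, hxv⟩ := Nat.sInf_mem hNne
  obtain ⟨y, hyB, hyv⟩ := Nat.sSup_mem hNne hNbdd
  refine ⟨sInf N, sSup N, ?_, ?_, ?_, ?_⟩
  · have := (hint x hxB).1; omega
  · rw [← hxv]; exact le_csSup hNbdd ⟨x, hxB, rfl⟩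
  · have := (hint y hyB).2; omega
  · intro v
    constructor
    · intro hv
      exact ⟨Nat.sInf_le ⟨v, hv, rfl⟩, le_csSup hNbdd ⟨v, hv, rfl⟩⟩
    · rintro ⟨hv1, hv2⟩
      obtain ⟨z, hz, hzv⟩ := hbetween ⟨x, hxB⟩ ⟨y, hyB⟩ v.val (by simpa [hxv]) (by simpa [hyv])
      have : z = v := Fin.ext hzv
      exact this ▸ hz


set_option maxHeartbeats 1600000 in
/-- Corollary 8: every 3-connected minor of a graph in `𝒢̃`
belongs to `𝒢̃`. -/
theorem threeConnected_minor_of_Gtilde {V W : Type*} (G : SimpleGraph V)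
    (H : SimpleGraph W) (hG : InGtilde G) (hH : KConnected 3 H)
    (hm : IsMinor H G) : InGtilde H := by
  classical
  obtain ⟨n, r, s, plus, hparams, ⟨e⟩⟩ := hG
  have hm' : IsMinor H (Gnrs n r s plus) := isMinor_iso e hm
  clear hm e
  have hn4 : 4 ≤ n := by
    rcases hparams with ⟨_, h, _⟩ | ⟨h, _⟩ <;> omega
  have hfacts : r ≤ n-3 ∧ s ≤ n-3 ∧ r + s ≤ n-1 := by
    rcases hparams with ⟨_, h, ⟨h1, h2⟩ | ⟨h1, h2⟩⟩ | ⟨h1, h2, h3, h4, h5, h6 | h6⟩ <;> omega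
  obtain ⟨hr3, hs3, hrs⟩ := hfacts
  have hW4 : 3 < Nat.card W := hH.1
  have hWfin : Finite W := Nat.finite_of_card_ne_zero (by omega)
  have hWfin' : Fintype W := Fintype.ofFinite W
  have hcardW : 4 ≤ Fintype.card W := by
    have h := Nat.card_eq_fintype_card (α := W)
    omega
  have hWne : Nonempty W := Fintype.card_pos_iff.mp (by omega)
  obtain ⟨B, hconn, hdisj, hedge⟩ := hm'
  have hBne : ∀ w, (B w).Nonempty := by
    intro w
    obtain ⟨⟨v, hv⟩⟩ := (hconn w).nonempty
    exact ⟨v, hv⟩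
  set v0 : Fin n := ⟨0, by omega⟩ with hv0
  set v1 : Fin n := ⟨n-1, by omega⟩ with hv1
  have huniq : ∀ (v : Fin n) (w w' : W), v ∈ B w → v ∈ B w' → w = w' := by
    intro v w w' hw hw'
    by_contra hne
    exact (hdisj w w' hne).ne_of_mem hw hw' rfl
  by_cases hmain : ∃ p q : W, p ≠ q ∧ v0 ∈ B p ∧ v1 ∈ B q
  · obtain ⟨p, q, hpq, hp, hq⟩ := hmain
    have hIntAll : ∀ w : W, w ≠ p → w ≠ q → ∃ a b : ℕ, 1 ≤ a ∧ a ≤ b ∧ b ≤ n-2 ∧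
        ∀ v : Fin n, v ∈ B w ↔ (a ≤ v.val ∧ v.val ≤ b) := by
      intro w hwp hwq
      refine interval_of_connected hn4 (hconn w) ?_ ?_
      · intro v hv hc
        exact hwp (huniq v0 w p (by rwa [show v = v0 from Fin.ext hc] at hv) hp)
      · intro v hv hc
        exact hwq (huniq v1 w q (by rwa [show v = v1 from Fin.ext hc] at hv) hq)
    choose! lo hi hlo1 hlohi hhi2 hmem using hIntAll
    set m : ℕ := Fintype.card W - 2 with hmdef
    have hm2 : 2 ≤ m := by omega
    set T : Finset W := (Finset.univ.erase p).erase q with hT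
    have hTmem : ∀ w : W, w ∈ T ↔ (w ≠ p ∧ w ≠ q) := by
      intro w
      rw [hT]
      simp only [Finset.mem_erase, Finset.mem_univ, and_true]
      tauto
    have hTcard : T.card = m := by
      have h1 : q ∈ Finset.univ.erase p := Finset.mem_erase.mpr ⟨Ne.symm hpq, Finset.mem_univ _⟩
      rw [hT, Finset.card_erase_of_mem h1, Finset.card_erase_of_mem (Finset.mem_univ _),
        Finset.card_univ]
      omega
    have hloinj : ∀ w ∈ T, ∀ w' ∈ T, lo w = lo w' → w = w' := by
      intro w hw w' hw' heq
      obtain ⟨hwp, hwq⟩ := (hTmem w).mp hw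
      obtain ⟨hwp', hwq'⟩ := (hTmem w').mp hw'
      have hbd : lo w < n := by
        have := hhi2 w hwp hwq; have := hlohi w hwp hwq; omega
      have h1 : (⟨lo w, hbd⟩ : Fin n) ∈ B w :=
        (hmem w hwp hwq _).mpr ⟨le_refl _, hlohi w hwp hwq⟩
      have h2 : (⟨lo w, hbd⟩ : Fin n) ∈ B w' :=
        (hmem w' hwp' hwq' _).mpr ⟨show lo w' ≤ lo w by omega,
          show lo w ≤ hi w' by have := hlohi w' hwp' hwq'; omega⟩
      exact huniq _ _ _ h1 h2
    set mins : Finset ℕ := T.image lo with hmins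
    have hminscard : mins.card = m := by
      rw [hmins, Finset.card_image_of_injOn (fun w hw w' hw' => hloinj w hw w' hw'), hTcard]
    set σ := mins.orderIsoOfFin hminscard with hσ
    set ω : ℕ → W := fun j => if h : j < m then (Finset.mem_image.mp (σ ⟨j, h⟩).2).choose else p
      with hω
    have hωspec : ∀ j, ∀ h : j < m, ω j ∈ T ∧ lo (ω j) = ((σ ⟨j, h⟩ : ℕ)) := by
      intro j h
      have hs := (Finset.mem_image.mp (σ ⟨j, h⟩).2).choose_spec
      rw [hω]
      simp only [dif_pos h]
      exact ⟨hs.1, hs.2⟩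
    have hωT : ∀ j, j < m → ω j ≠ p ∧ ω j ≠ q := fun j h => (hTmem _).mp (hωspec j h).1
    have hLomono : ∀ j k, ∀ hj : j < m, ∀ hk : k < m, j < k → lo (ω j) < lo (ω k) := by
      intro j k hj hk hjk
      rw [(hωspec j hj).2, (hωspec k hk).2]
      exact Subtype.coe_lt_coe.mpr (σ.strictMono (show (⟨j, hj⟩ : Fin m) < ⟨k, hk⟩ from hjk))
    have hωinj : ∀ j k, j < m → k < m → ω j = ω k → j = k := by
      intro j k hj hk heq
      by_contra hne
      rcases Nat.lt_or_ge j k with h | h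
      · have := hLomono j k hj hk h; rw [heq] at this; omega
      · have hkj : k < j := by omega
        have := hLomono k j hk hj hkj; rw [heq] at this; omega
    have hωsurj : ∀ w ∈ T, ∃ j, ∃ h : j < m, ω j = w := by
      intro w hw
      have hmem' : lo w ∈ mins := Finset.mem_image_of_mem lo hw
      obtain ⟨i, hi'⟩ := σ.surjective ⟨lo w, hmem'⟩
      refine ⟨i.val, i.isLt, ?_⟩
      apply hloinj _ (hωspec i.val i.isLt).1 _ hw
      rw [(hωspec i.val i.isLt).2]
      have : (⟨i.val, i.isLt⟩ : Fin m) = i := rfl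
      rw [this, hi']
    have hmemω : ∀ j, j < m → ∀ v : Fin n, (v ∈ B (ω j) ↔ (lo (ω j) ≤ v.val ∧ v.val ≤ hi (ω j))) :=
      fun j h => hmem _ (hωT j h).1 (hωT j h).2
    have hlo1ω : ∀ j, j < m → 1 ≤ lo (ω j) := fun j h => hlo1 _ (hωT j h).1 (hωT j h).2
    have hlohiω : ∀ j, j < m → lo (ω j) ≤ hi (ω j) := fun j h => hlohi _ (hωT j h).1 (hωT j h).2
    have hhi2ω : ∀ j, j < m → hi (ω j) ≤ n-2 := fun j h => hhi2 _ (hωT j h).1 (hωT j h).2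
    have hord : ∀ j k, j < k → k < m → hi (ω j) < lo (ω k) := by
      intro j k hjk hk
      have hj : j < m := by omega
      by_contra hc
      push_neg at hc
      have hbd : lo (ω k) < n := by have := hhi2ω j hj; omega
      have hv1' : (⟨lo (ω k), hbd⟩ : Fin n) ∈ B (ω j) :=
        (hmemω j hj _).mpr ⟨le_of_lt (hLomono j k hj hk hjk), hc⟩
      have hv2' : (⟨lo (ω k), hbd⟩ : Fin n) ∈ B (ω k) :=
        (hmemω k hk _).mpr ⟨le_refl _, hlohiω k hk⟩
      have := hωinj j k hj hk (huniq _ _ _ hv1' hv2')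
      omega
    have hII : ∀ j k, ∀ hj : j < m, ∀ hk : k < m, j < k → H.Adj (ω j) (ω k) →
        k = j + 1 ∧ lo (ω k) = hi (ω j) + 1 := by
      intro j k hj hk hjk hadj
      obtain ⟨u, hu, v, hv, huv⟩ := hedge _ _ hadj
      have hu' := (hmemω j hj u).mp hu
      have hv' := (hmemω k hk v).mp hv
      have h1 := hlo1ω j hj; have h2 := hhi2ω j hj
      have h3 := hlo1ω k hk; have h4 := hhi2ω k hk
      have hjk' := hord j k hjk hk
      have hstep := gnrs_adj_internal huv (by omega) (by omega) (by omega) (by omega) hn4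
      have hk1 : k = j + 1 := by
        by_contra hc
        have hj1 : j + 1 < k := by omega
        have ha := hord j (j+1) (by omega) (by omega)
        have hb := hord (j+1) k hj1 hk
        have hc' := hlohiω (j+1) (by omega)
        omega
      exact ⟨hk1, by rw [hk1] at hv' hjk' ⊢; omega⟩
    have hII' : ∀ j k, ∀ hj : j < m, ∀ hk : k < m, H.Adj (ω j) (ω k) → (k = j+1 ∨ j = k+1) := by
      intro j k hj hk hadj
      rcases Nat.lt_trichotomy j k with h | h | h
      · exact Or.inl (hII j k hj hk h hadj).1
      · subst h; exact absurd hadj (H.irrefl)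
      · exact Or.inr (hII k j hk hj h hadj.symm).1
    have hSpq : (H.induce ({p, q} : Set W)ᶜ).Connected := by
      apply hH.2
      rw [Set.ncard_pair hpq]
      omega
    have hpath : ∀ j, j + 1 < m → H.Adj (ω j) (ω (j+1)) ∧ lo (ω (j+1)) = hi (ω j) + 1 := by
      intro j hj1
      set X : Set W := {w | ∃ i, ∃ h : i < m, i ≤ j ∧ ω i = w} with hX
      have hXA : X ⊆ ({p, q} : Set W)ᶜ := by
        rintro w ⟨i, hi', hij, rfl⟩
        simp only [Set.mem_compl_iff, Set.mem_insert_iff, Set.mem_singleton_iff]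
        push_neg
        exact ⟨(hωT i hi').1, (hωT i hi').2⟩
      have hx0 : ω 0 ∈ X := ⟨0, by omega, by omega, rfl⟩
      have hy0 : ω (j+1) ∈ ({p, q} : Set W)ᶜ := by
        simp only [Set.mem_compl_iff, Set.mem_insert_iff, Set.mem_singleton_iff]
        push_neg
        exact ⟨(hωT _ hj1).1, (hωT _ hj1).2⟩
      have hy0X : ω (j+1) ∉ X := by
        rintro ⟨i, hi', hij, heq⟩
        have := hωinj i (j+1) hi' hj1 heq
        omega
      obtain ⟨u, hu, v, hv, hvX, hadj⟩ := exists_cross_edge hSpq hXA hx0 hy0 hy0X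
      obtain ⟨i, hi', hij, rfl⟩ := hu
      have hv' : v ≠ p ∧ v ≠ q := by
        simpa [Set.mem_compl_iff, not_or] using hv
      obtain ⟨k, hk, rfl⟩ := hωsurj v ((hTmem v).mpr hv')
      have hkj : ¬(k ≤ j) := fun hc => hvX ⟨k, hk, hc, rfl⟩
      rcases hII' i k hi' hk hadj with h | h
      · have h1 : i = j := by omega
        have h2 : k = j + 1 := by omega
        rw [h1, h2] at hadj
        exact ⟨hadj, (hII j (j+1) (by omega) hj1 (by omega) hadj).2⟩
      · omega
    have hcover : ∀ j, ∀ hj : j < m, ∀ t, lo (ω 0) ≤ t → t ≤ hi (ω j) →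
        ∃ k, ∃ hk : k < m, lo (ω k) ≤ t ∧ t ≤ hi (ω k) := by
      intro j
      induction j with
      | zero => exact fun hj t h1 h2 => ⟨0, hj, h1, h2⟩
      | succ i ih =>
        intro hj t h1 h2
        by_cases hc : lo (ω (i+1)) ≤ t
        · exact ⟨i+1, hj, hc, h2⟩
        · exact ih (by omega) t h1 (by have := (hpath i hj).2; omega)
    have hnoblk : ∀ w', (w' = p ∨ w' = q) → ∀ v : Fin n, v ∈ B w' →
        ¬(lo (ω 0) ≤ v.val ∧ v.val ≤ hi (ω (m-1))) := by
      rintro w' hw' v hv ⟨h1, h2⟩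
      obtain ⟨k, hk, hk1, hk2⟩ := hcover (m-1) (by omega) v.val h1 h2
      have hvk : v ∈ B (ω k) := (hmemω k hk v).mpr ⟨hk1, hk2⟩
      have heq := huniq v w' (ω k) hv hvk
      rcases hw' with rfl | rfl
      · exact (hωT k hk).1 heq.symm
      · exact (hωT k hk).2 heq.symm
    have hPadj : ∀ j, 1 ≤ j → j ≤ m-2 → H.Adj p (ω j) → n-1-r ≤ hi (ω j) := by
      intro j hj1 hj2 hadj
      have hjm : j < m := by omega
      obtain ⟨u, hu, v, hv, huv⟩ := hedge _ _ hadj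
      have hv' := (hmemω j hjm v).mp hv
      have hva : 1 ≤ v.val := le_trans (hlo1ω j hjm) hv'.1
      have hvb : v.val ≤ n-2 := le_trans hv'.2 (hhi2ω j hjm)
      by_cases hu0 : u.val = 0
      · rcases gnrs_adj_hub0 hn4 hu0 huv hvb with h | h
        · exfalso
          have := hLomono 0 j (by omega) hjm (by omega)
          have := hlo1ω 0 (by omega)
          omega
        · omega
      · exfalso
        have hun1 : u.val ≠ n-1 := by
          intro hc
          exact hpq (huniq v1 p q (by rwa [show u = v1 from Fin.ext hc] at hu) hq)
        have hui : 1 ≤ u.val ∧ u.val ≤ n-2 := ⟨by omega, by have := u.isLt; omega⟩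
        have hstep := gnrs_adj_internal huv hui.1 hui.2 (by omega) (by omega) hn4
        have hnob := hnoblk p (Or.inl rfl) u hu
        have hb1 := hLomono 0 j (by omega) hjm (by omega)
        have hb2 := hord j (m-1) (by omega) (by omega)
        have hb3 := hlohiω (m-1) (by omega)
        exact hnob (by constructor <;> omega)
    have hQadj : ∀ j, 1 ≤ j → j ≤ m-2 → H.Adj q (ω j) → lo (ω j) ≤ s := by
      intro j hj1 hj2 hadj
      have hjm : j < m := by omega
      obtain ⟨u, hu, v, hv, huv⟩ := hedge _ _ hadj
      have hv' := (hmemω j hjm v).mp hv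
      have hva : 1 ≤ v.val := le_trans (hlo1ω j hjm) hv'.1
      have hvb : v.val ≤ n-2 := le_trans hv'.2 (hhi2ω j hjm)
      by_cases hu1 : u.val = n-1
      · rcases gnrs_adj_hub1 hn4 hu1 huv hva hvb with h | h
        · omega
        · exfalso
          have hb2 := hord j (m-1) (by omega) (by omega)
          have := hhi2ω (m-1) (by omega)
          have := hlohiω (m-1) (by omega)
          omega
      · exfalso
        have hu0 : u.val ≠ 0 := by
          intro hc
          exact hpq (huniq v0 p q hp (by rwa [show u = v0 from Fin.ext hc] at hu))
        have hui : 1 ≤ u.val ∧ u.val ≤ n-2 := ⟨by omega, by have := u.isLt; omega⟩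
        have hstep := gnrs_adj_internal huv hui.1 hui.2 (by omega) (by omega) hn4
        have hnob := hnoblk q (Or.inr rfl) u hu
        have hb1 := hLomono 0 j (by omega) hjm (by omega)
        have hb2 := hord j (m-1) (by omega) (by omega)
        have hb3 := hlohiω (m-1) (by omega)
        exact hnob (by constructor <;> omega)
    have hNj : ∀ j, ∀ hj : j < m, ∀ w', H.Adj (ω j) w' →
        w' = p ∨ w' = q ∨ ∃ k, ∃ hk : k < m, (k = j+1 ∨ j = k+1) ∧ w' = ω k := by
      intro j hj w' hadj
      by_cases h1 : w' = p
      · exact Or.inl h1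
      by_cases h2 : w' = q
      · exact Or.inr (Or.inl h2)
      obtain ⟨k, hk, rfl⟩ := hωsurj w' ((hTmem w').mpr ⟨h1, h2⟩)
      exact Or.inr (Or.inr ⟨k, hk, hII' j k hj hk hadj, rfl⟩)
    have hend0 : H.Adj p (ω 0) ∧ H.Adj q (ω 0) := by
      constructor
      · by_contra hc
        refine kconn_no_two_cover hH (ω 0) q (ω 1) ?_
        intro w' hadj
        rcases hNj 0 (by omega) w' hadj with h | h | ⟨k, hk, hk', rfl⟩
        · subst h; exact absurd hadj.symm hc
        · exact Or.inl h
        · right; rw [show k = 1 by omega]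
      · by_contra hc
        refine kconn_no_two_cover hH (ω 0) p (ω 1) ?_
        intro w' hadj
        rcases hNj 0 (by omega) w' hadj with h | h | ⟨k, hk, hk', rfl⟩
        · exact Or.inl h
        · subst h; exact absurd hadj.symm hc
        · right; rw [show k = 1 by omega]
    have hendm : H.Adj p (ω (m-1)) ∧ H.Adj q (ω (m-1)) := by
      constructor
      · by_contra hc
        refine kconn_no_two_cover hH (ω (m-1)) q (ω (m-2)) ?_
        intro w' hadj
        rcases hNj (m-1) (by omega) w' hadj with h | h | ⟨k, hk, hk', rfl⟩
        · subst h; exact absurd hadj.symm hc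
        · exact Or.inl h
        · right; rw [show k = m-2 by omega]
      · by_contra hc
        refine kconn_no_two_cover hH (ω (m-1)) p (ω (m-2)) ?_
        intro w' hadj
        rcases hNj (m-1) (by omega) w' hadj with h | h | ⟨k, hk, hk', rfl⟩
        · exact Or.inl h
        · subst h; exact absurd hadj.symm hc
        · right; rw [show k = m-2 by omega]
    have hint_pq : ∀ j, 1 ≤ j → j ≤ m-2 → H.Adj p (ω j) ∨ H.Adj q (ω j) := by
      intro j h1 h2
      by_contra hc
      push_neg at hc
      refine kconn_no_two_cover hH (ω j) (ω (j-1)) (ω (j+1)) ?_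
      intro w' hadj
      rcases hNj j (by omega) w' hadj with h | h | ⟨k, hk, hk', rfl⟩
      · subst h; exact absurd hadj.symm hc.1
      · subst h; exact absurd hadj.symm hc.2
      · rcases hk' with rfl | h'
        · exact Or.inr rfl
        · left; rw [show k = j - 1 by omega]
    have hSE : ∀ j k, 1 ≤ j → j < k → k ≤ m-2 → n-1-r ≤ hi (ω j) → lo (ω k) ≤ s → False := by
      intro j k h1 h2 h3 h4 h5
      have := hord j k h2 (by omega)
      omega
    have hPdex : ∃ j, 1 ≤ j ∧ j ≤ m-1 ∧ H.Adj p (ω j) := ⟨m-1, by omega, le_refl _, hendm.1⟩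
    set dd := Nat.find hPdex with hdddef
    obtain ⟨hdd1, hddm, hddAdj⟩ : 1 ≤ dd ∧ dd ≤ m-1 ∧ H.Adj p (ω dd) := Nat.find_spec hPdex
    have hF : ∀ h, 1 ≤ h → h < dd → ¬H.Adj p (ω h) := by
      intro h h1 h2 hadj
      exact Nat.find_min hPdex h2 ⟨h1, by omega, hadj⟩
    set cc := Nat.findGreatest (fun h => H.Adj q (ω h)) (m-2) with hccdef
    have hccAdj : H.Adj q (ω cc) := by
      have h := Nat.findGreatest_spec (P := fun h => H.Adj q (ω h)) (n := m-2)
        (Nat.zero_le _) hend0.2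
      rwa [← hccdef] at h
    have hccm : cc ≤ m-2 := by
      rw [hccdef]; exact Nat.findGreatest_le _
    have hE : ∀ h, cc < h → h ≤ m-2 → ¬H.Adj q (ω h) := by
      intro h h1 h2 hadj
      rw [hccdef] at h1
      exact Nat.findGreatest_is_greatest h1 h2 hadj
    have hccdd : cc ≤ dd := by
      by_contra hc
      push_neg at hc
      exact hSE dd cc hdd1 hc hccm (hPadj dd hdd1 (by omega) hddAdj)
        (hQadj cc (by omega) hccm hccAdj)
    have hA : ∀ h, h ≤ cc → H.Adj q (ω h) := by
      intro h hh
      rcases Nat.eq_zero_or_pos h with rfl | h1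
      · exact hend0.2
      by_contra hc
      have hp' : H.Adj p (ω h) := (hint_pq h h1 (by omega)).resolve_right hc
      have hhcc : h < cc := lt_of_le_of_ne hh (fun he => hc (he ▸ hccAdj))
      exact hSE h cc h1 hhcc hccm (hPadj h h1 (by omega) hp') (hQadj cc (by omega) hccm hccAdj)
    have hB' : ∀ h, dd ≤ h → h ≤ m-1 → H.Adj p (ω h) := by
      intro h h1 h2
      by_contra hc
      have hne : h ≠ m-1 := fun he => hc (he ▸ hendm.1)
      have h2' : h ≤ m-2 := by omega
      have hq' : H.Adj q (ω h) := (hint_pq h (by omega) h2').resolve_left hc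
      have hddh : dd < h := lt_of_le_of_ne h1 (fun he => hc (he ▸ hddAdj))
      exact hSE dd h hdd1 hddh h2' (hPadj dd hdd1 (by omega) hddAdj) (hQadj h (by omega) h2' hq')
    have hddcc : dd ≤ cc + 1 := by
      by_contra hc
      push_neg at hc
      have h1 : 1 ≤ cc + 1 := by omega
      have h2 : cc + 1 ≤ m-2 := by omega
      rcases hint_pq (cc+1) h1 h2 with h | h
      · exact Nat.find_min hPdex (show cc+1 < dd by omega) ⟨h1, by omega, h⟩
      · exact Nat.findGreatest_is_greatest (show cc < cc+1 by omega) h2 h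
    have hplus1 : dd = m-1 → H.Adj p q := by
      intro hddm1
      by_contra hc
      refine kconn_no_two_cover hH p (ω 0) (ω (m-1)) ?_
      intro w' hadj
      by_cases h1 : w' = q
      · exact absurd (h1 ▸ hadj) hc
      have h2 : w' ≠ p := (H.ne_of_adj hadj).symm
      obtain ⟨k, hk, rfl⟩ := hωsurj w' ((hTmem w').mpr ⟨h2, h1⟩)
      rcases Nat.eq_zero_or_pos k with rfl | hk1
      · exact Or.inl rfl
      · right
        have hadj' : H.Adj p (ω k) := hadj
        have hnk : ¬(k < dd) := fun hlt => hF k hk1 hlt hadj'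
        rw [show k = m-1 by omega]
    have hplus2 : cc = 0 → H.Adj p q := by
      intro hcc0
      by_contra hc
      refine kconn_no_two_cover hH q (ω 0) (ω (m-1)) ?_
      intro w' hadj
      by_cases h1 : w' = p
      · subst h1; exact absurd hadj.symm hc
      have h2 : w' ≠ q := (H.ne_of_adj hadj).symm
      obtain ⟨k, hk, rfl⟩ := hωsurj w' ((hTmem w').mpr ⟨h1, h2⟩)
      rcases Nat.lt_or_ge k (m-1) with hk1 | hk1
      · rcases Nat.eq_zero_or_pos k with rfl | hk2
        · exact Or.inl rfl
        · exact absurd hadj (hE k (by omega) (by omega))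
      · right; rw [show k = m-1 by omega]
    have hN1 : ∀ k, k < m → (H.Adj p (ω k) ↔ (k = 0 ∨ dd ≤ k)) := by
      intro k hk
      constructor
      · intro h
        by_contra hc
        push_neg at hc
        exact hF k (by omega) (by omega) h
      · rintro (rfl | h)
        · exact hend0.1
        · exact hB' k h (by omega)
    have hN2 : ∀ k, k < m → (H.Adj q (ω k) ↔ (k ≤ cc ∨ k = m-1)) := by
      intro k hk
      constructor
      · intro h
        by_contra hc
        push_neg at hc
        exact hE k (by omega) (by omega) h
      · rintro (h | rfl)
        · exact hA k h
        · exact hendm.2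
    have hN3 : ∀ k l, ∀ hk : k < m, ∀ hl : l < m, (H.Adj (ω k) (ω l) ↔ (l = k+1 ∨ k = l+1)) := by
      intro k l hk hl
      constructor
      · exact hII' k l hk hl
      · rintro (rfl | rfl)
        · exact (hpath k hl).1
        · exact ((hpath l hk).1).symm
    obtain ⟨plus', hplus'⟩ : ∃ b : Bool, (H.Adj p q ↔ b = true) := by
      by_cases h : H.Adj p q
      · exact ⟨true, by simp [h]⟩
      · exact ⟨false, by simp [h]⟩
    have hcardW' : Fintype.card W = m + 2 := by omega
    set ψ : Fin (m+2) → W :=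
      fun i => if i.val = 0 then p else if i.val = m+1 then q else ω (i.val - 1) with hψ
    have key : ∀ i : Fin (m+2), (i.val = 0 ∧ ψ i = p) ∨ (i.val = m+1 ∧ ψ i = q) ∨
        (1 ≤ i.val ∧ i.val ≤ m ∧ ψ i = ω (i.val - 1)) := by
      intro i
      by_cases h1 : i.val = 0
      · refine Or.inl ⟨h1, ?_⟩
        rw [hψ]
        simp only
        rw [if_pos h1]
      by_cases h2 : i.val = m+1
      · refine Or.inr (Or.inl ⟨h2, ?_⟩)
        rw [hψ]
        simp only
        rw [if_neg h1, if_pos h2]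
      · have := i.isLt
        refine Or.inr (Or.inr ⟨by omega, by omega, ?_⟩)
        rw [hψ]
        simp only
        rw [if_neg h1, if_neg h2]
    have hψinj : Function.Injective ψ := by
      intro i j hij
      have hi := i.isLt; have hj := j.isLt
      rcases key i with ⟨hi1, hi2⟩ | ⟨hi1, hi2⟩ | ⟨hi1, hi1', hi2⟩ <;>
        rcases key j with ⟨hj1, hj2⟩ | ⟨hj1, hj2⟩ | ⟨hj1, hj1', hj2⟩
      · exact Fin.ext (by omega)
      · rw [hi2, hj2] at hij; exact absurd hij hpq
      · rw [hi2, hj2] at hij; exact absurd hij.symm (hωT (j.val-1) (by omega)).1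
      · rw [hi2, hj2] at hij; exact absurd hij.symm hpq
      · exact Fin.ext (by omega)
      · rw [hi2, hj2] at hij; exact absurd hij.symm (hωT (j.val-1) (by omega)).2
      · rw [hi2, hj2] at hij; exact absurd hij (hωT (i.val-1) (by omega)).1
      · rw [hi2, hj2] at hij; exact absurd hij (hωT (i.val-1) (by omega)).2
      · rw [hi2, hj2] at hij
        have := hωinj (i.val-1) (j.val-1) (by omega) (by omega) hij
        exact Fin.ext (by omega)
    have hψbij : Function.Bijective ψ := by
      rw [Fintype.bijective_iff_injective_and_card]
      exact ⟨hψinj, by simp [hcardW']⟩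
    have hAdjIff : ∀ i j : Fin (m+2),
        (H.Adj (ψ i) (ψ j) ↔ (Gnrs (m+2) (m-dd) (cc+1) plus').Adj i j) := by
      intro i j
      have hi := i.isLt; have hj := j.isLt
      have hgr : (Gnrs (m+2) (m-dd) (cc+1) plus').Adj i j ↔ i.val ≠ j.val ∧
          ((j.val = i.val + 1 ∨ (i.val = 0 ∧ dd+1 ≤ j.val ∧ j.val ≤ m) ∨
            (j.val = m+1 ∧ 1 ≤ i.val ∧ i.val ≤ cc+1) ∨ (plus' = true ∧ i.val = 0 ∧ j.val = m+1)) ∨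
           (i.val = j.val + 1 ∨ (j.val = 0 ∧ dd+1 ≤ i.val ∧ i.val ≤ m) ∨
            (i.val = m+1 ∧ 1 ≤ j.val ∧ j.val ≤ cc+1) ∨ (plus' = true ∧ j.val = 0 ∧ i.val = m+1))) := by
        rw [gnrs_adj]
        have e1 : (m+2)-1-(m-dd) = dd + 1 := by omega
        have e2 : (m+2)-2 = m := by omega
        have e3 : (m+2)-1 = m+1 := by omega
        rw [e1, e2, e3]
        constructor
        · rintro ⟨hne, h⟩
          exact ⟨fun hc => hne (Fin.ext hc), h⟩
        · rintro ⟨hne, h⟩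
          exact ⟨fun hc => hne (congrArg Fin.val hc), h⟩
      rcases key i with ⟨hi1, hi2⟩ | ⟨hi1, hi2⟩ | ⟨hi1, hi1', hi2⟩ <;>
        rcases key j with ⟨hj1, hj2⟩ | ⟨hj1, hj2⟩ | ⟨hj1, hj1', hj2⟩ <;>
        rw [hi2, hj2, hgr]
      · -- p p
        constructor
        · intro h; exact absurd h H.irrefl
        · rintro ⟨hne, _⟩; exact absurd (hi1.trans hj1.symm) hne
      · -- p q
        constructor
        · intro h
          exact ⟨by omega, Or.inl (Or.inr (Or.inr (Or.inr ⟨hplus'.mp h, hi1, hj1⟩)))⟩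
        · rintro ⟨hne, h⟩
          apply hplus'.mpr
          rcases h with (h | ⟨a,b,c⟩ | ⟨a,b,c⟩ | ⟨a,b,c⟩) | (h | ⟨a,b,c⟩ | ⟨a,b,c⟩ | ⟨a,b,c⟩) <;>
            first | exact a | (exfalso; omega)
      · -- p ω
        rw [hN1 (j.val-1) (by omega)]
        constructor
        · intro h
          refine ⟨by omega, Or.inl ?_⟩
          rcases h with h | h
          · exact Or.inl (by omega)
          · exact Or.inr (Or.inl ⟨hi1, by omega, by omega⟩)
        · rintro ⟨hne, h⟩
          rcases h with (h | ⟨a,b,c⟩ | ⟨a,b,c⟩ | ⟨a,b,c⟩) | (h | ⟨a,b,c⟩ | ⟨a,b,c⟩ | ⟨a,b,c⟩) <;>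
            omega
      · -- q p
        rw [H.adj_comm]
        constructor
        · intro h
          exact ⟨by omega, Or.inr (Or.inr (Or.inr (Or.inr ⟨hplus'.mp h, hj1, hi1⟩)))⟩
        · rintro ⟨hne, h⟩
          apply hplus'.mpr
          rcases h with (h | ⟨a,b,c⟩ | ⟨a,b,c⟩ | ⟨a,b,c⟩) | (h | ⟨a,b,c⟩ | ⟨a,b,c⟩ | ⟨a,b,c⟩) <;>
            first | exact a | (exfalso; omega)
      · -- q q
        constructor
        · intro h; exact absurd h H.irrefl
        · rintro ⟨hne, _⟩; exact absurd (hi1.trans hj1.symm) hne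
      · -- q ω
        rw [hN2 (j.val-1) (by omega)]
        constructor
        · intro h
          refine ⟨by omega, ?_⟩
          rcases h with h | h
          · exact Or.inr (Or.inr (Or.inr (Or.inl ⟨hi1, by omega, by omega⟩)))
          · exact Or.inr (Or.inl (by omega))
        · rintro ⟨hne, h⟩
          rcases h with (h | ⟨a,b,c⟩ | ⟨a,b,c⟩ | ⟨a,b,c⟩) | (h | ⟨a,b,c⟩ | ⟨a,b,c⟩ | ⟨a,b,c⟩) <;>
            omega
      · -- ω p
        rw [H.adj_comm, hN1 (i.val-1) (by omega)]
        constructor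
        · intro h
          refine ⟨by omega, Or.inr ?_⟩
          rcases h with h | h
          · exact Or.inl (by omega)
          · exact Or.inr (Or.inl ⟨hj1, by omega, by omega⟩)
        · rintro ⟨hne, h⟩
          rcases h with (h | ⟨a,b,c⟩ | ⟨a,b,c⟩ | ⟨a,b,c⟩) | (h | ⟨a,b,c⟩ | ⟨a,b,c⟩ | ⟨a,b,c⟩) <;>
            omega
      · -- ω q
        rw [H.adj_comm, hN2 (i.val-1) (by omega)]
        constructor
        · intro h
          refine ⟨by omega, ?_⟩
          rcases h with h | h
          · exact Or.inl (Or.inr (Or.inr (Or.inl ⟨hj1, by omega, by omega⟩)))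
          · exact Or.inl (Or.inl (by omega))
        · rintro ⟨hne, h⟩
          rcases h with (h | ⟨a,b,c⟩ | ⟨a,b,c⟩ | ⟨a,b,c⟩) | (h | ⟨a,b,c⟩ | ⟨a,b,c⟩ | ⟨a,b,c⟩) <;>
            omega
      · -- ω ω
        rw [hN3 (i.val-1) (j.val-1) (by omega) (by omega)]
        constructor
        · intro h
          exact ⟨by omega, by omega⟩
        · rintro ⟨hne, h⟩
          rcases h with (h | ⟨a,b,c⟩ | ⟨a,b,c⟩ | ⟨a,b,c⟩) | (h | ⟨a,b,c⟩ | ⟨a,b,c⟩ | ⟨a,b,c⟩) <;>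
            omega
    set E := Equiv.ofBijective ψ hψbij with hE
    refine ⟨m+2, m-dd, cc+1, plus', ?_, ⟨⟨E.symm, ?_⟩⟩⟩
    · by_cases h1 : dd = m-1
      · left
        exact ⟨hplus'.mp (hplus1 h1), by omega, Or.inl ⟨by omega, by omega⟩⟩
      · by_cases h2 : cc = 0
        · left
          exact ⟨hplus'.mp (hplus2 h2), by omega, Or.inr ⟨by omega, by omega⟩⟩
        · right
          refine ⟨by omega, by omega, by omega, by omega, by omega, by omega⟩
    · intro a b
      have h := hAdjIff (E.symm a) (E.symm b)
      have ha : ψ (E.symm a) = a := E.apply_symm_apply a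
      have hb : ψ (E.symm b) = b := E.apply_symm_apply b
      rw [ha, hb] at h
      exact h.symm
  · exfalso
    have hstar : ∃ wstar : W, ∀ w, w ≠ wstar → v0 ∉ B w ∧ v1 ∉ B w := by
      by_cases h0 : ∃ p, v0 ∈ B p
      · obtain ⟨p, hp⟩ := h0
        refine ⟨p, fun w hw => ⟨fun hc => hw (huniq v0 w p hc hp), fun hc => ?_⟩⟩
        exact hmain ⟨p, w, Ne.symm hw, hp, hc⟩
      · push_neg at h0
        by_cases h1 : ∃ q, v1 ∈ B q
        · obtain ⟨q, hq⟩ := h1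
          exact ⟨q, fun w hw => ⟨h0 w, fun hc => hw (huniq v1 w q hc hq)⟩⟩
        · push_neg at h1
          exact ⟨Classical.arbitrary W, fun w _ => ⟨h0 w, h1 w⟩⟩
    obtain ⟨wstar, hstar⟩ := hstar
    have hIntAll : ∀ w : W, w ≠ wstar → ∃ a b : ℕ, 1 ≤ a ∧ a ≤ b ∧ b ≤ n-2 ∧
        ∀ v : Fin n, v ∈ B w ↔ (a ≤ v.val ∧ v.val ≤ b) := by
      intro w hw
      refine interval_of_connected hn4 (hconn w) ?_ ?_
      · intro v hv hc
        exact (hstar w hw).1 (by rwa [show v = v0 from Fin.ext hc] at hv)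
      · intro v hv hc
        exact (hstar w hw).2 (by rwa [show v = v1 from Fin.ext hc] at hv)
    choose! lo hi hlo1 hlohi hhi2 hmem using hIntAll
    set T : Finset W := Finset.univ.erase wstar with hT
    have hTcard : 3 ≤ T.card := by
      rw [hT, Finset.card_erase_of_mem (Finset.mem_univ _), Finset.card_univ]
      omega
    have hTne : T.Nonempty := Finset.card_pos.mp (by omega)
    obtain ⟨w₀, hw₀T, hw₀min⟩ := Finset.exists_min_image T lo hTne
    have hw₀ : w₀ ≠ wstar := by
      have := Finset.mem_erase.mp (hT ▸ hw₀T)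
      exact this.1
    obtain ⟨y, hy⟩ : ∃ y : W, ∀ w' : W, w' ≠ wstar → (∃ v ∈ B w', v.val = hi w₀ + 1) → w' = y := by
      by_cases hEx : ∃ w' : W, w' ≠ wstar ∧ ∃ v ∈ B w', v.val = hi w₀ + 1
      · obtain ⟨y, hy1, v, hv, hvval⟩ := hEx
        refine ⟨y, fun w' hw' h => ?_⟩
        obtain ⟨u, hu, huval⟩ := h
        have : u = v := Fin.ext (by omega)
        exact huniq v w' y (this ▸ hu) hv
      · exact ⟨wstar, fun w' hw' hc => absurd ⟨w', hw', hc⟩ hEx⟩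
    refine kconn_no_two_cover hH w₀ wstar y ?_
    intro w' hadj
    by_cases hws : w' = wstar
    · exact Or.inl hws
    right
    obtain ⟨u, hu, v, hv, huv⟩ := hedge w₀ w' hadj
    have hne' : w' ≠ w₀ := (H.ne_of_adj hadj).symm
    have hu' := (hmem w₀ hw₀ u).mp hu
    have hv' := (hmem w' hws v).mp hv
    have ha1 := hlo1 w₀ hw₀; have ha2 := hlohi w₀ hw₀; have ha3 := hhi2 w₀ hw₀
    have hb1 := hlo1 w' hws; have hb2 := hlohi w' hws; have hb3 := hhi2 w' hws
    have hstep := gnrs_adj_internal huv (by omega) (by omega) (by omega) (by omega) hn4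
    have hvnotin : ¬(lo w₀ ≤ v.val ∧ v.val ≤ hi w₀) := by
      intro hc
      exact hne' (huniq v w' w₀ hv ((hmem w₀ hw₀ v).mpr hc))
    rcases hstep with h | h
    · exact hy w' hws ⟨v, hv, by omega⟩
    · have hminw' := hw₀min w' (by rw [hT]; exact Finset.mem_erase.mpr ⟨hws, Finset.mem_univ _⟩)
      omega



end K24Paper
end

section
/- The graph C⁺ is K_{2,4}-minor-free. -/
namespace K24Paper

instance : DecidableRel GCplus.Adj := fun a b =>
  decidable_of_iff _ (SimpleGraph.fromRel_adj _ a b).symm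

def nbMask : Fin 8 → Nat
| 0 => 70 | 1 => 133 | 2 => 35 | 3 => 240 | 4 => 232 | 5 => 28 | 6 => 25 | 7 => 26

def adjB (a b : Fin 8) : Bool := (nbMask a).testBit b.val

lemma adjB_correct : ∀ a b : Fin 8, GCplus.Adj a b → adjB a b = true := by decide

def step (s c : Finset (Fin 8)) : Finset (Fin 8) :=
  s.filter (fun v => v ∈ c ∨ ∃ u ∈ c, adjB u v = true)

def iter : Nat → Finset (Fin 8) → Finset (Fin 8) → Finset (Fin 8)
| 0, _, c => c
| n+1, s, c => iter n s (step s c)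

def connB (s : Finset (Fin 8)) : Bool :=
  if h : s.Nonempty then decide (s ⊆ iter 8 s {s.min' h}) else true

lemma step_subset (s c : Finset (Fin 8)) : step s c ⊆ s := Finset.filter_subset _ _

lemma subset_step {s c : Finset (Fin 8)} (hc : c ⊆ s) : c ⊆ step s c :=
  fun v hv => Finset.mem_filter.mpr ⟨hc hv, Or.inl hv⟩

lemma grow {s c : Finset (Fin 8)}
    (hconn : (GCplus.induce (↑s : Set (Fin 8))).Connected)
    (hc : c ⊆ s) (hne : c.Nonempty) (hns : ¬ s ⊆ c) : c ⊂ step s c := by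
  obtain ⟨u, hu⟩ := hne
  obtain ⟨v, hvs, hvc⟩ := Finset.not_subset.mp hns
  have hu' : u ∈ (↑s : Set (Fin 8)) := Finset.mem_coe.mpr (hc hu)
  have hv' : v ∈ (↑s : Set (Fin 8)) := Finset.mem_coe.mpr hvs
  obtain ⟨w⟩ := hconn.preconnected ⟨u, hu'⟩ ⟨v, hv'⟩
  obtain ⟨d, _, hdf, hds⟩ :=
    w.exists_boundary_dart {x : (↑s : Set (Fin 8)) | (x : Fin 8) ∈ c} hu hvc
  have hadj : GCplus.Adj (d.fst : Fin 8) (d.snd : Fin 8) := d.adj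
  have hy : (d.snd : Fin 8) ∈ step s c := by
    refine Finset.mem_filter.mpr ⟨Finset.mem_coe.mp d.snd.2, Or.inr ⟨_, hdf, ?_⟩⟩
    exact adjB_correct _ _ hadj
  exact (Finset.ssubset_iff_of_subset (subset_step hc)).mpr ⟨_, hy, hds⟩

lemma cover {s : Finset (Fin 8)}
    (hconn : (GCplus.induce (↑s : Set (Fin 8))).Connected) :
    ∀ n (c : Finset (Fin 8)), c ⊆ s → c.Nonempty → s.card ≤ c.card + n →
      s ⊆ iter n s c := by
  intro n
  induction n with
  | zero =>
    intro c hc _ hcard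
    have := Finset.eq_of_subset_of_card_le hc (by omega)
    rw [iter, this]
  | succ n ih =>
    intro c hc hne hcard
    show s ⊆ iter n s (step s c)
    by_cases hs : s ⊆ c
    · exact ih (step s c) (step_subset s c) (hne.mono (subset_step hc))
        (by have h1 := Finset.card_le_card hs
            have h2 := Finset.card_le_card (subset_step hc); omega)
    · have hlt := Finset.card_lt_card (grow hconn hc hne hs)
      exact ih (step s c) (step_subset s c) (hne.mono (subset_step hc)) (by omega)

lemma conn_connB {s : Finset (Fin 8)}
    (h : (GCplus.induce (↑s : Set (Fin 8))).Connected) : connB s = true := by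
  have hne : s.Nonempty := by
    obtain ⟨⟨x, hx⟩⟩ := h.nonempty
    exact ⟨x, Finset.mem_coe.mp hx⟩
  rw [connB, dif_pos hne]
  refine decide_eq_true (cover h 8 {s.min' hne} ?_ ⟨_, Finset.mem_singleton_self _⟩ ?_)
  · exact Finset.singleton_subset_iff.mpr (s.min'_mem hne)
  · have := Finset.card_le_univ s
    simp only [Finset.card_singleton, Finset.card_univ, Fintype.card_fin] at this ⊢
    omega

def L : List (Finset (Fin 8)) :=
  [{0}, {1}, {0, 1}, {2}, {0, 2}, {1, 2}, {0, 1, 2}, {3}, {4}, {3, 4}, {5}, {2, 5}, {0, 2, 5}, {1, 2, 5}, {3, 5},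
   {2, 3, 5}, {4, 5}, {2, 4, 5}, {3, 4, 5}, {6}, {0, 6}, {0, 1, 6}, {0, 2, 6}, {3, 6}, {0, 3, 6}, {4, 6}, {0, 4, 6},
   {3, 4, 6}, {3, 5, 6}, {4, 5, 6}, {7}, {1, 7}, {0, 1, 7}, {1, 2, 7}, {3, 7}, {1, 3, 7}, {4, 7}, {1, 4, 7}, {3, 4, 7},
   {3, 5, 7}, {4, 5, 7}, {3, 6, 7}, {4, 6, 7}]

def X (r1 r2 r : Finset (Fin 8)) : Finset (Fin 8) :=
  (Finset.univ \ (r1 ∪ r2)).filter (fun v => ∃ b ∈ r, adjB b v = true)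

set_option maxRecDepth 100000 in
set_option maxHeartbeats 4000000 in
theorem memL : ∀ s : Finset (Fin 8), s.Nonempty → s.card ≤ 3 → connB s = true → s ∈ L := by decide

set_option maxRecDepth 100000 in
set_option maxHeartbeats 4000000 in
theorem key_s6 : ∀ r1 ∈ L, ∀ r2 ∈ L, Disjoint r1 r2 →
    ¬(4 ≤ (X r1 r2 r1).card ∧ 4 ≤ (X r1 r2 r2).card) := by decide



/-- Lemma 9: the graph `C⁺` is `K_{2,4}`-minor-free. -/
theorem GCplus_K24MinorFree : MinorFree K24 GCplus := by
  rintro ⟨B, hconn, hdisj, hadj⟩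
  have hfin : ∀ w : Fin 2 ⊕ Fin 4, (B w).Finite := fun w => Set.toFinite _
  let F : Fin 2 ⊕ Fin 4 → Finset (Fin 8) := fun w => (hfin w).toFinset
  have hcoe : ∀ w, (F w : Set (Fin 8)) = B w := fun w => (hfin w).coe_toFinset
  have hmem : ∀ w x, x ∈ B w → x ∈ F w := fun w x hx => by
    rw [← hcoe w] at hx; exact Finset.mem_coe.mp hx
  have hFconn : ∀ w, connB (F w) = true := fun w =>
    conn_connB (by rw [hcoe]; exact hconn w)
  have hFdisj : ∀ w1 w2, w1 ≠ w2 → Disjoint (F w1) (F w2) := fun w1 w2 h => by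
    rw [← Finset.disjoint_coe, hcoe, hcoe]; exact hdisj w1 w2 h
  have hFne : ∀ w, (F w).Nonempty := fun w => by
    obtain ⟨⟨x, hx⟩⟩ := (hconn w).nonempty
    exact ⟨x, hmem w x hx⟩
  have h1 : ∀ w, 1 ≤ (F w).card := fun w => (hFne w).card_pos
  -- cardinality bound
  have c5 : (F (.inr 2) ∪ F (.inr 3)).card = (F (.inr 2)).card + (F (.inr 3)).card :=
    Finset.card_union_of_disjoint (hFdisj _ _ (by decide))
  have c4 : (F (.inr 1) ∪ (F (.inr 2) ∪ F (.inr 3))).card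
      = (F (.inr 1)).card + (F (.inr 2) ∪ F (.inr 3)).card :=
    Finset.card_union_of_disjoint (Finset.disjoint_union_right.mpr
      ⟨hFdisj _ _ (by decide), hFdisj _ _ (by decide)⟩)
  have c3 : (F (.inr 0) ∪ (F (.inr 1) ∪ (F (.inr 2) ∪ F (.inr 3)))).card
      = (F (.inr 0)).card + (F (.inr 1) ∪ (F (.inr 2) ∪ F (.inr 3))).card :=
    Finset.card_union_of_disjoint (Finset.disjoint_union_right.mpr
      ⟨hFdisj _ _ (by decide), Finset.disjoint_union_right.mpr
        ⟨hFdisj _ _ (by decide), hFdisj _ _ (by decide)⟩⟩)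
  have c2 : (F (.inl 1) ∪ (F (.inr 0) ∪ (F (.inr 1) ∪ (F (.inr 2) ∪ F (.inr 3))))).card
      = (F (.inl 1)).card + (F (.inr 0) ∪ (F (.inr 1) ∪ (F (.inr 2) ∪ F (.inr 3)))).card :=
    Finset.card_union_of_disjoint (Finset.disjoint_union_right.mpr
      ⟨hFdisj _ _ (by decide), Finset.disjoint_union_right.mpr
        ⟨hFdisj _ _ (by decide), Finset.disjoint_union_right.mpr
          ⟨hFdisj _ _ (by decide), hFdisj _ _ (by decide)⟩⟩⟩)
  have c1 : (F (.inl 0) ∪ (F (.inl 1) ∪ (F (.inr 0) ∪ (F (.inr 1) ∪ (F (.inr 2) ∪ F (.inr 3)))))).card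
      = (F (.inl 0)).card + (F (.inl 1) ∪ (F (.inr 0) ∪ (F (.inr 1) ∪ (F (.inr 2) ∪ F (.inr 3))))).card :=
    Finset.card_union_of_disjoint (Finset.disjoint_union_right.mpr
      ⟨hFdisj _ _ (by decide), Finset.disjoint_union_right.mpr
        ⟨hFdisj _ _ (by decide), Finset.disjoint_union_right.mpr
          ⟨hFdisj _ _ (by decide), Finset.disjoint_union_right.mpr
            ⟨hFdisj _ _ (by decide), hFdisj _ _ (by decide)⟩⟩⟩⟩)
  have htot : (F (.inl 0) ∪ (F (.inl 1) ∪ (F (.inr 0) ∪ (F (.inr 1) ∪ (F (.inr 2) ∪ F (.inr 3)))))).card ≤ 8 := by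
    have := Finset.card_le_univ
      (F (.inl 0) ∪ (F (.inl 1) ∪ (F (.inr 0) ∪ (F (.inr 1) ∪ (F (.inr 2) ∪ F (.inr 3))))))
    simpa using this
  have h30 : (F (.inl 0)).card ≤ 3 := by
    have := h1 (.inl 1); have := h1 (.inr 0); have := h1 (.inr 1)
    have := h1 (.inr 2); have := h1 (.inr 3); omega
  have h31 : (F (.inl 1)).card ≤ 3 := by
    have := h1 (.inl 0); have := h1 (.inr 0); have := h1 (.inr 1)
    have := h1 (.inr 2); have := h1 (.inr 3); omega
  -- the four attachment vertices for each side
  have hK : ∀ (a : Fin 2) (b : Fin 4), K24.Adj (.inl a) (.inr b) := fun a b => Or.inl ⟨rfl, rfl⟩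
  have hXmem : ∀ (a : Fin 2) (i : Fin 4), ∃ v ∈ F (.inr i),
      v ∈ X (F (.inl 0)) (F (.inl 1)) (F (.inl a)) := by
    intro a i
    obtain ⟨b, hb, v, hv, hbv⟩ := hadj (.inl a) (.inr i) (hK a i)
    refine ⟨v, hmem _ _ hv, Finset.mem_filter.mpr ⟨Finset.mem_sdiff.mpr
      ⟨Finset.mem_univ _, fun hmem' => ?_⟩, ⟨b, hmem _ _ hb, adjB_correct _ _ hbv⟩⟩⟩
    rcases Finset.mem_union.mp hmem' with h' | h'
    · exact Finset.disjoint_left.mp (hFdisj (.inr i) (.inl 0) (by simp)) (hmem _ _ hv) h'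
    · exact Finset.disjoint_left.mp (hFdisj (.inr i) (.inl 1) (by simp)) (hmem _ _ hv) h'
  have hX4 : ∀ (a : Fin 2), 4 ≤ (X (F (.inl 0)) (F (.inl 1)) (F (.inl a))).card := by
    intro a
    obtain ⟨v0, hv0, hx0⟩ := hXmem a 0
    obtain ⟨v1, hv1, hx1⟩ := hXmem a 1
    obtain ⟨v2, hv2, hx2⟩ := hXmem a 2
    obtain ⟨v3, hv3, hx3⟩ := hXmem a 3
    have ne01 : v0 ≠ v1 := fun h => Finset.disjoint_left.mp
      (hFdisj (.inr 0) (.inr 1) (by decide)) hv0 (h ▸ hv1)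
    have ne02 : v0 ≠ v2 := fun h => Finset.disjoint_left.mp
      (hFdisj (.inr 0) (.inr 2) (by decide)) hv0 (h ▸ hv2)
    have ne03 : v0 ≠ v3 := fun h => Finset.disjoint_left.mp
      (hFdisj (.inr 0) (.inr 3) (by decide)) hv0 (h ▸ hv3)
    have ne12 : v1 ≠ v2 := fun h => Finset.disjoint_left.mp
      (hFdisj (.inr 1) (.inr 2) (by decide)) hv1 (h ▸ hv2)
    have ne13 : v1 ≠ v3 := fun h => Finset.disjoint_left.mp
      (hFdisj (.inr 1) (.inr 3) (by decide)) hv1 (h ▸ hv3)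
    have ne23 : v2 ≠ v3 := fun h => Finset.disjoint_left.mp
      (hFdisj (.inr 2) (.inr 3) (by decide)) hv2 (h ▸ hv3)
    have hsub : ({v0, v1, v2, v3} : Finset (Fin 8)) ⊆ X (F (.inl 0)) (F (.inl 1)) (F (.inl a)) := by
      intro x hx
      simp only [Finset.mem_insert, Finset.mem_singleton] at hx
      rcases hx with rfl | rfl | rfl | rfl <;> assumption
    have hcard : ({v0, v1, v2, v3} : Finset (Fin 8)).card = 4 := by
      rw [Finset.card_insert_of_notMem (by simp [ne01, ne02, ne03]),
          Finset.card_insert_of_notMem (by simp [ne12, ne13]),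
          Finset.card_insert_of_notMem (by simp [ne23]), Finset.card_singleton]
    calc 4 = ({v0, v1, v2, v3} : Finset (Fin 8)).card := hcard.symm
    _ ≤ _ := Finset.card_le_card hsub
  exact key_s6 (F (.inl 0)) (memL _ (hFne _) h30 (hFconn _))
    (F (.inl 1)) (memL _ (hFne _) h31 (hFconn _))
    (hFdisj _ _ (by decide)) ⟨hX4 0, hX4 1⟩


end K24Paper
end

section
/- Every 4-connected graph on at least six vertices has a K_{2,4} minor. -/
/-!
If `G` is complete, any six of its vertices carry a `K_{2,4}`. Otherwise pick non-adjacent `a`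
and `b`. By 4-connectivity no three vertices separate `N(a)` from `N(b)` in `G - a - b`, so
Menger's theorem yields four disjoint connected sets, each meeting `N(a)` and `N(b)` and avoiding
`a` and `b`; together with `{a}` and `{b}` they are the branch sets of a `K_{2,4}` minor.

Menger's theorem is proved with connected vertex sets in place of paths, by Göring's induction on
the number of edges: if deleting an edge `xy` leaves an `A`–`B` separator `S` with fewer than `k`
vertices, then `S ∪ {x}` and `S ∪ {y}` separate `A` from `B` in `G`, and fans from `A` to
`S ∪ {x}` and from `S ∪ {y}` to `B`, found in proper subgraphs, glue together along `S` and `xy`.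
-/

namespace Set

open Function

lemma exists_equiv_mem_of_pairwise_disjoint {V ι κ : Type*} [Finite ι] {X : Set V} [Finite X]
    {P : ι → Set V} (hP : Pairwise (Disjoint on P)) (hX : ∀ i, (P i ∩ X).Nonempty)
    (hcard : Nat.card X ≤ Nat.card ι) (f : κ ≃ X) : ∃ σ : κ ≃ ι, ∀ j, (f j : V) ∈ P (σ j) := by
  choose g hgP hgX using hX
  have hg : Injective fun i => (⟨g i, hgX i⟩ : X) := by
    intro i j hij
    simp only [Subtype.mk.injEq] at hij
    exact (hP.pairwiseDisjoint univ).elim_set trivial trivial _ (hgP i) (hij ▸ hgP j)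
  set e := Equiv.ofBijective _ (hg.bijective_of_nat_card_le hcard)
  refine ⟨f.trans e.symm, fun j => ?_⟩
  rw [← congrArg Subtype.val (e.apply_symm_apply (f j))]
  exact hgP _

end Set

namespace SimpleGraph

open Function

variable {V : Type*} {G H : SimpleGraph V} {A B C S T U : Set V} {k : ℕ} {u v w x y : V}

def within (G : SimpleGraph V) (U : Set V) : SimpleGraph V where
  Adj u v := G.Adj u v ∧ u ∈ U ∧ v ∈ U
  symm := ⟨fun _ _ h => ⟨h.1.symm, h.2.2, h.2.1⟩⟩

@[simp] lemma within_adj : (G.within U).Adj u v ↔ G.Adj u v ∧ u ∈ U ∧ v ∈ U := Iff.rfl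

lemma within_le (U : Set V) : G.within U ≤ G := fun _ _ h => h.1

lemma lt_of_le_of_adj (hHG : H ≤ G) (hxy : G.Adj x y) (hH : ¬ H.Adj x y) : H < G :=
  lt_of_le_of_ne hHG fun h => hH (h ▸ hxy)

def reachAvoiding (G : SimpleGraph V) (A S : Set V) : Set V :=
  {v | ∃ a ∈ A, ∃ p : G.Walk a v, ∀ w ∈ p.support, w ∉ S}

def Separates (G : SimpleGraph V) (A B S : Set V) : Prop :=
  Disjoint (G.reachAvoiding A S) B

def IsConnector (G : SimpleGraph V) (A B C : Set V) : Prop :=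
  (G.induce C).Connected ∧ (C ∩ A).Nonempty ∧ (C ∩ B).Nonempty

def HasConnectors (G : SimpleGraph V) (A B : Set V) (k : ℕ) : Prop :=
  ∃ C : Fin k → Set V, Pairwise (Disjoint on C) ∧ ∀ i, G.IsConnector A B (C i)

lemma notMem_of_mem_reachAvoiding (hv : v ∈ G.reachAvoiding A S) : v ∉ S := by
  obtain ⟨_, _, p, hp⟩ := hv
  exact hp v p.end_mem_support

lemma diff_subset_reachAvoiding : A \ S ⊆ G.reachAvoiding A S :=
  fun a ha => ⟨a, ha.1, Walk.nil, by simpa using ha.2⟩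

lemma reachAvoiding_step (hv : v ∈ G.reachAvoiding A S) (hvw : G.Adj v w) (hw : w ∉ S) :
    w ∈ G.reachAvoiding A S := by
  obtain ⟨a, ha, p, hp⟩ := hv
  refine ⟨a, ha, p.concat hvw, fun z hz => ?_⟩
  rw [Walk.support_concat, List.mem_append, List.mem_singleton] at hz
  rcases hz with hz | rfl
  exacts [hp z hz, hw]

lemma reachAvoiding_subset {Z : Set V} (hA : A \ S ⊆ Z)
    (hZ : ∀ v ∈ Z, ∀ w, G.Adj v w → w ∉ S → w ∈ Z) : G.reachAvoiding A S ⊆ Z := by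
  have key : ∀ {u v : V} (p : G.Walk u v), u ∈ Z → (∀ w ∈ p.support, w ∉ S) → v ∈ Z := by
    intro u v p
    induction p with
    | nil => exact fun hu _ => hu
    | cons h p ih =>
      intro hu hp
      exact ih (hZ _ hu _ h (hp _ (by simp))) fun w hw => hp w (by simp [hw])
  rintro v ⟨a, ha, p, hp⟩
  exact key p (hA ⟨ha, hp a p.start_mem_support⟩) hp

lemma reachAvoiding_within_subset (hA : A ⊆ U) : (G.within U).reachAvoiding A S ⊆ U :=
  reachAvoiding_subset (Set.sdiff_subset.trans hA) fun _ _ _ h _ => (within_adj.mp h).2.2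

lemma subset_reachAvoiding_of_preconnected (hC : (G.induce C).Preconnected) (hu : u ∈ C) :
    C ⊆ G.reachAvoiding {u} Cᶜ := by
  have key : ∀ {a b : C} (p : (G.induce C).Walk a b),
      (a : V) ∈ G.reachAvoiding {u} Cᶜ → (b : V) ∈ G.reachAvoiding {u} Cᶜ := by
    intro a b p
    induction p with
    | nil => exact id
    | cons h _ ih => exact fun ha => ih (reachAvoiding_step ha h (not_not.mpr (Subtype.prop _)))
  intro v hv
  obtain ⟨p⟩ := hC ⟨u, hu⟩ ⟨v, hv⟩
  exact key p (diff_subset_reachAvoiding ⟨rfl, not_not.mpr hu⟩)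

lemma subset_of_connected_within (hC : ((G.within U).induce C).Connected) (hCU : (C ∩ U).Nonempty) :
    C ⊆ U := by
  obtain ⟨u, huC, huU⟩ := hCU
  exact (subset_reachAvoiding_of_preconnected hC.preconnected huC).trans
    (reachAvoiding_within_subset (Set.singleton_subset_iff.mpr huU))

lemma separates_self : G.Separates A B B :=
  Set.disjoint_left.mpr fun _ hv => notMem_of_mem_reachAvoiding hv

lemma Separates.disjoint_reachAvoiding (h : G.Separates A B S) :
    Disjoint (G.reachAvoiding A S) (G.reachAvoiding B S) := by
  have hR : G.reachAvoiding B S ⊆ (G.reachAvoiding A S ∪ S)ᶜ := by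
    refine reachAvoiding_subset (fun b hb => ?_) fun v hv w hvw hw => ?_
    · simp only [Set.compl_union, Set.mem_inter_iff, Set.mem_compl_iff]
      exact ⟨fun hbA => Set.disjoint_left.mp h hbA hb.1, hb.2⟩
    · simp only [Set.compl_union, Set.mem_inter_iff, Set.mem_compl_iff] at hv ⊢
      exact ⟨fun hwA => hv.1 (reachAvoiding_step hwA hvw.symm hv.2), hw⟩
  exact Set.disjoint_left.mpr fun v hvA hvB => hR hvB (Or.inl hvA)

lemma Separates.symm (h : G.Separates A B S) : G.Separates B A S :=
  Set.disjoint_left.mpr fun _ haB haA =>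
    Set.disjoint_left.mp h.disjoint_reachAvoiding
      (diff_subset_reachAvoiding ⟨haA, notMem_of_mem_reachAvoiding haB⟩) haB

lemma induce_le_induce (hGH : G ≤ H) : G.induce C ≤ H.induce C := fun _ _ h => hGH h

lemma IsConnector.mono (hGH : G ≤ H) (hC : G.IsConnector A B C) : H.IsConnector A B C :=
  ⟨hC.1.mono (induce_le_induce hGH), hC.2⟩

lemma HasConnectors.mono (hGH : G ≤ H) (hG : G.HasConnectors A B k) : H.HasConnectors A B k :=
  let ⟨C, hCd, hC⟩ := hG
  ⟨C, hCd, fun i => (hC i).mono hGH⟩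

lemma hasConnectors_of_forall_not_adj [Finite V] (hG : ∀ x y, ¬ G.Adj x y)
    (h : ∀ T, G.Separates A B T → k ≤ T.ncard) : G.HasConnectors A B k := by
  have hsep : G.Separates A B (A ∩ B) := Set.disjoint_left.mpr fun v hv hvB =>
    notMem_of_mem_reachAvoiding hv
      ⟨reachAvoiding_subset (Z := A) (fun _ ha => ha.1) (fun _ _ _ h => (hG _ _ h).elim) hv, hvB⟩
  have := Fintype.ofFinite ↥(A ∩ B)
  obtain ⟨f⟩ : Nonempty (Fin k ↪ ↥(A ∩ B)) := Function.Embedding.nonempty_of_card_le <| by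
    rw [Fintype.card_fin, ← Nat.card_eq_fintype_card, Nat.card_coe_set_eq]
    exact h _ hsep
  refine ⟨fun i => {(f i : V)}, fun i j hij => ?_, fun i => ⟨?_, ?_, ?_⟩⟩
  · exact Set.disjoint_singleton.mpr fun h => hij (f.injective (Subtype.ext h))
  · rw [induce_singleton_eq_top]
    exact connected_top
  · exact ⟨f i, rfl, (f i).2.1⟩
  · exact ⟨f i, rfl, (f i).2.2⟩

lemma deleteEdges_adj_of_ne (hvw : G.Adj v w) (hvx : v ≠ x) (hvy : v ≠ y) :
    (G.deleteEdges {s(x, y)}).Adj v w := by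
  refine deleteEdges_adj.mpr ⟨hvw, ?_⟩
  rw [Set.mem_singleton_iff, Sym2.eq_iff]
  tauto

lemma separates_of_separates_within (hS : (G.deleteEdges {s(x, y)}).Separates A B S)
    (hy : y ∉ (G.deleteEdges {s(x, y)}).reachAvoiding A S)
    (hT : (G.within ((G.deleteEdges {s(x, y)}).reachAvoiding A S ∪ S)).Separates A (insert x S) T) :
    G.Separates A B T := by
  set L := (G.deleteEdges {s(x, y)}).reachAvoiding A S
  set M := (G.within (L ∪ S)).reachAvoiding A T
  have hAL : A ⊆ L ∪ S := fun a ha => by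
    by_cases haS : a ∈ S
    exacts [Or.inr haS, Or.inl (diff_subset_reachAvoiding ⟨ha, haS⟩)]
  have hML : ∀ v ∈ M, v ∈ L ∧ v ≠ x := fun v hv => by
    have hvX : v ∉ insert x S := Set.disjoint_left.mp hT hv
    rcases reachAvoiding_within_subset hAL hv with hvL | hvS
    · exact ⟨hvL, fun h => hvX (Or.inl h)⟩
    · exact (hvX (Or.inr hvS)).elim
  have hGM : G.reachAvoiding A T ⊆ M := by
    refine reachAvoiding_subset diff_subset_reachAvoiding fun v hv w hvw hwT => ?_
    obtain ⟨hvL, hvx⟩ := hML v hv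
    have hw : w ∈ L ∪ S := by
      by_cases hwS : w ∈ S
      · exact Or.inr hwS
      · exact Or.inl (reachAvoiding_step hvL
          (deleteEdges_adj_of_ne hvw hvx fun h => hy (h ▸ hvL)) hwS)
    exact reachAvoiding_step hv ⟨hvw, Or.inl hvL, hw⟩ hwT
  exact Set.disjoint_left.mpr fun v hv hvB => Set.disjoint_left.mp hS (hML v (hGM hv)).1 hvB

/-- The fan is found in `G.within (L ∪ S)`, where `L` is the side of `S` containing `A` in
`G - xy`; this graph lacks the edge `xy`, and by pigeonhole each member of the fan meets
`insert x S` in a single vertex, so the fan can be indexed along `f`. -/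
lemma exists_fan_to_insert [Finite V] {κ : Type*}
    (ih : ∀ H < G, ∀ A B k, (∀ T, H.Separates A B T → k ≤ T.ncard) → H.HasConnectors A B k)
    (hxy : G.Adj x y) (hS : (G.deleteEdges {s(x, y)}).Separates A B S)
    (hx : x ∈ (G.deleteEdges {s(x, y)}).reachAvoiding A S)
    (hy : y ∉ (G.deleteEdges {s(x, y)}).reachAvoiding A S ∪ S)
    (hk : S.ncard < k) (h : ∀ T, G.Separates A B T → k ≤ T.ncard) (f : κ ≃ ↥(insert x S)) :
    ∃ P : κ → Set V, Pairwise (Disjoint on P) ∧ ∀ j, (G.induce (P j)).Connected ∧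
      (P j ∩ A).Nonempty ∧ (f j : V) ∈ P j ∧
      P j ⊆ (G.deleteEdges {s(x, y)}).reachAvoiding A S ∪ S := by
  set L := (G.deleteEdges {s(x, y)}).reachAvoiding A S
  have hXL : insert x S ⊆ L ∪ S := Set.insert_subset (Or.inl hx) Set.subset_union_right
  obtain ⟨C, hCd, hC⟩ := ih _ (lt_of_le_of_adj (within_le _) hxy fun h => hy (within_adj.mp h).2.2)
    A (insert x S) (insert x S).ncard fun T hT => (Set.ncard_insert_le x S).trans <|
      Nat.succ_le_of_lt <| hk.trans_le <| h T <|
        separates_of_separates_within hS (fun h => hy (Or.inl h)) hT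
  obtain ⟨σ, hσ⟩ := Set.exists_equiv_mem_of_pairwise_disjoint hCd (fun i => (hC i).2.2) (by simp) f
  refine ⟨C ∘ σ, hCd.comp_of_injective σ.injective, fun j => ⟨?_, (hC (σ j)).2.1, hσ j, ?_⟩⟩
  · exact (hC (σ j)).1.mono (induce_le_induce (within_le _))
  · exact subset_of_connected_within (hC (σ j)).1 ⟨f j, hσ j, hXL (f j).2⟩

lemma xor_mem_reachAvoiding_of_walk (p : G.Walk u v) (hp : ∀ w ∈ p.support, w ∉ S)
    (hu : u ∈ (G.deleteEdges {s(x, y)}).reachAvoiding A S)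
    (hv : v ∉ (G.deleteEdges {s(x, y)}).reachAvoiding A S) :
    Xor (x ∈ (G.deleteEdges {s(x, y)}).reachAvoiding A S)
      (y ∈ (G.deleteEdges {s(x, y)}).reachAvoiding A S) := by
  obtain ⟨d, hd, hd1, hd2⟩ := p.exists_boundary_dart _ hu hv
  have hdxy : s(d.fst, d.snd) = s(x, y) := by
    by_contra hne
    exact hd2 (reachAvoiding_step hd1 (deleteEdges_adj.mpr ⟨d.adj, hne⟩)
      (hp _ (p.dart_snd_mem_support_of_mem_darts hd)))
  rcases Sym2.eq_iff.mp hdxy with ⟨h1, h2⟩ | ⟨h1, h2⟩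
  · exact Or.inl ⟨h1 ▸ hd1, h2 ▸ hd2⟩
  · exact Or.inr ⟨h1 ▸ hd1, h2 ▸ hd2⟩

lemma mem_reachAvoiding_of_not_separates (hS : (G.deleteEdges {s(x, y)}).Separates A B S)
    (hG : ¬ G.Separates A B S) :
    x ∈ (G.deleteEdges {s(x, y)}).reachAvoiding A S ∧
        y ∈ (G.deleteEdges {s(x, y)}).reachAvoiding B S ∨
      y ∈ (G.deleteEdges {s(x, y)}).reachAvoiding A S ∧
        x ∈ (G.deleteEdges {s(x, y)}).reachAvoiding B S := by
  obtain ⟨v, ⟨a, ha, p, hp⟩, hvB⟩ := Set.not_disjoint_iff.mp hG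
  have hLR := Set.disjoint_left.mp hS.disjoint_reachAvoiding
  have haL := diff_subset_reachAvoiding (G := G.deleteEdges {s(x, y)})
    ⟨ha, hp a p.start_mem_support⟩
  have hvR := diff_subset_reachAvoiding (G := G.deleteEdges {s(x, y)})
    ⟨hvB, hp v p.end_mem_support⟩
  have hL := xor_mem_reachAvoiding_of_walk p hp haL fun hvL => Set.disjoint_left.mp hS hvL hvB
  have hR := xor_mem_reachAvoiding_of_walk p.reverse (by simpa using hp) hvR (hLR haL)
  have := @hLR x
  have := @hLR y
  unfold Xor at hL hR
  tauto

lemma pairwise_disjoint_union_of_anchor {κ : Type*} {L R : Set V} {P Q : κ → Set V}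
    (hLR : Disjoint L R) (hP : Pairwise (Disjoint on P)) (hQ : Pairwise (Disjoint on Q))
    (hPL : ∀ j, P j ⊆ L ∪ S) (hQR : ∀ j, Q j ⊆ R ∪ S) (anchor : S → κ)
    (hanchor : ∀ s, (s : V) ∈ P (anchor s) ∧ (s : V) ∈ Q (anchor s)) :
    Pairwise (Disjoint on fun j => P j ∪ Q j) := by
  have cross : ∀ j j' v, v ∈ P j → v ∈ Q j' → j = j' := by
    intro j j' v hvP hvQ
    have hvS : v ∈ S := by
      rcases hPL j hvP with hvL | hvS
      · rcases hQR j' hvQ with hvR | hvS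
        exacts [(Set.disjoint_left.mp hLR hvL hvR).elim, hvS]
      · exact hvS
    exact ((hP.pairwiseDisjoint Set.univ).elim_set trivial trivial v hvP (hanchor ⟨v, hvS⟩).1).trans
      ((hQ.pairwiseDisjoint Set.univ).elim_set trivial trivial v (hanchor ⟨v, hvS⟩).2 hvQ)
  intro j j' hne
  simp only [onFun, Set.disjoint_union_left, Set.disjoint_union_right]
  refine ⟨⟨hP hne, ?_⟩, ?_, hQ hne⟩ <;> refine Set.disjoint_left.mpr fun v h1 h2 => hne ?_
  exacts [(cross _ _ v h2 h1).symm, cross _ _ v h1 h2]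

lemma hasConnectors_of_separates_deleteEdges [Finite V]
    (ih : ∀ H < G, ∀ A B k, (∀ T, H.Separates A B T → k ≤ T.ncard) → H.HasConnectors A B k)
    (hxy : G.Adj x y) (hS : (G.deleteEdges {s(x, y)}).Separates A B S)
    (hx : x ∈ (G.deleteEdges {s(x, y)}).reachAvoiding A S)
    (hy : y ∈ (G.deleteEdges {s(x, y)}).reachAvoiding B S)
    (hk : S.ncard < k) (h : ∀ T, G.Separates A B T → k ≤ T.ncard) : G.HasConnectors A B k := by
  classical
  have hLR := hS.disjoint_reachAvoiding
  have hxS : x ∉ S := notMem_of_mem_reachAvoiding hx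
  have hyS : y ∉ S := notMem_of_mem_reachAvoiding hy
  obtain ⟨P, hPd, hP⟩ := exists_fan_to_insert ih hxy hS hx
    (by rintro (hyL | hyS'); exacts [Set.disjoint_left.mp hLR hyL hy, hyS hyS'])
    hk h (Equiv.Set.insert hxS).symm
  have hswap : G.deleteEdges {s(y, x)} = G.deleteEdges {s(x, y)} := by rw [Sym2.eq_swap]
  obtain ⟨Q, hQd, hQ⟩ := exists_fan_to_insert (A := B) (B := A) ih hxy.symm
    (hswap ▸ hS.symm) (hswap ▸ hy)
    (by rw [hswap]; rintro (hxR | hxS'); exacts [Set.disjoint_left.mp hLR hx hxR, hxS hxS'])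
    hk (fun T hT => h T hT.symm) (Equiv.Set.insert hyS).symm
  rw [hswap] at hQ
  have hk' : k = S.ncard + 1 := by
    refine le_antisymm ((h _ ?_).trans (Set.ncard_insert_le x S)) hk
    exact separates_of_separates_within hS (Set.disjoint_right.mp hLR hy) separates_self
  obtain ⟨e⟩ : Nonempty (Fin k ≃ S ⊕ PUnit) := Finite.card_eq.mp (by simp [hk'])
  have hD := pairwise_disjoint_union_of_anchor hLR hPd hQd (fun j => (hP j).2.2.2)
    (fun j => (hQ j).2.2.2) Sum.inl fun s => by
      simpa using And.intro (hP (Sum.inl s)).2.2.1 (hQ (Sum.inl s)).2.2.1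
  have hDc : ∀ j, (G.induce (P j ∪ Q j)).Connected := by
    rintro (s | _)
    · exact induce_union_connected (hP _).1.preconnected (hQ _).1.preconnected
        ⟨s, by simpa using (hP (Sum.inl s)).2.2.1, by simpa using (hQ (Sum.inl s)).2.2.1⟩
    · exact connected_induce_union (hP _).1.preconnected (hQ _).1.preconnected
        (by simpa using (hP (Sum.inr _)).2.2.1) (by simpa using (hQ (Sum.inr _)).2.2.1) hxy
  refine ⟨fun i => P (e i) ∪ Q (e i), hD.comp_of_injective e.injective,
    fun i => ⟨hDc (e i), ?_, ?_⟩⟩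
  · exact (hP (e i)).2.1.mono (Set.inter_subset_inter_left _ Set.subset_union_left)
  · exact (hQ (e i)).2.1.mono (Set.inter_subset_inter_left _ Set.subset_union_right)

theorem hasConnectors_of_forall_separates [Finite V] (G : SimpleGraph V) (A B : Set V) (k : ℕ)
    (h : ∀ T, G.Separates A B T → k ≤ T.ncard) : G.HasConnectors A B k := by
  induction G using WellFoundedLT.induction generalizing k A B with
  | _ G ih =>
  by_cases hE : ∃ x y, G.Adj x y
  swap
  · push Not at hE
    exact hasConnectors_of_forall_not_adj hE h
  obtain ⟨x, y, hxy⟩ := hE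
  by_cases h' : ∀ T, (G.deleteEdges {s(x, y)}).Separates A B T → k ≤ T.ncard
  · exact (ih _ (lt_of_le_of_adj (deleteEdges_le _) hxy (by simp)) A B k h').mono
      (deleteEdges_le _)
  push Not at h'
  obtain ⟨S, hS, hSk⟩ := h'
  rcases mem_reachAvoiding_of_not_separates hS fun hG => (h S hG).not_gt hSk with
    ⟨hx, hy⟩ | ⟨hy, hx⟩
  · exact hasConnectors_of_separates_deleteEdges ih hxy hS hx hy hSk h
  · rw [Sym2.eq_swap] at hS hx hy
    exact hasConnectors_of_separates_deleteEdges ih hxy.symm hS hy hx hSk h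

lemma neighborSet_subset_compl_pair {a b : V} (hnadj : ¬ G.Adj a b) :
    G.neighborSet a ⊆ {a, b}ᶜ := by
  rintro v hv (rfl | rfl)
  exacts [G.loopless.irrefl _ hv, hnadj hv]

end SimpleGraph

namespace K24Paper

section

open Function

variable {V W : Type*} {G : SimpleGraph V}

lemma IsMinor.of_injective {H : SimpleGraph W} (f : H →g G) (hf : Injective f) : IsMinor H G := by
  refine ⟨fun w => {f w}, fun w => ?_, fun w₁ w₂ hne => Set.disjoint_singleton.mpr (hf.ne hne),
    fun w₁ w₂ h => ⟨_, rfl, _, rfl, f.map_adj h⟩⟩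
  rw [SimpleGraph.induce_singleton_eq_top]
  exact SimpleGraph.connected_top

lemma isMinor_completeBipartiteGraph {ι : Type*} {a b : V} (hab : a ≠ b) {C : ι → Set V}
    (hCd : Pairwise (Disjoint on C))
    (hC : ∀ i, G.IsConnector (G.neighborSet a) (G.neighborSet b) (C i))
    (hCab : ∀ i, C i ⊆ {a, b}ᶜ) :
    IsMinor (completeBipartiteGraph (Fin 2) ι) G := by
  have hab' : ∀ i, a ∉ C i ∧ b ∉ C i := fun i =>
    ⟨fun h => hCab i h (Or.inl rfl), fun h => hCab i h (Or.inr rfl)⟩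
  refine ⟨Sum.elim ![{a}, {b}] C, ?_, ?_, ?_⟩
  · rintro (i | i)
    · fin_cases i <;> simp
    · exact (hC i).1
  · rintro (i | i) (j | j) hne
    · fin_cases i <;> fin_cases j <;> simp_all [eq_comm]
    · fin_cases i <;> simp [hab']
    · fin_cases j <;> simp [hab']
    · exact hCd fun h => hne (congrArg _ h)
  · rintro (i | i) (j | j) h <;> simp at h
    · obtain ⟨⟨v, hv, hav⟩, ⟨w, hw, hbw⟩⟩ := (hC j).2
      fin_cases i
      · exact ⟨a, rfl, v, hv, hav⟩
      · exact ⟨b, rfl, w, hw, hbw⟩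
    · obtain ⟨⟨v, hv, hav⟩, ⟨w, hw, hbw⟩⟩ := (hC i).2
      fin_cases j
      · exact ⟨v, hv, a, rfl, hav.symm⟩
      · exact ⟨w, hw, b, rfl, hbw.symm⟩

lemma KConnected.le_ncard_of_separates [Finite V] {k : ℕ} {a b : V} (hG : KConnected k G)
    (hab : a ≠ b) (hnadj : ¬ G.Adj a b) {S : Set V}
    (hS : (G.within {a, b}ᶜ).Separates (G.neighborSet a) (G.neighborSet b) S) : k ≤ S.ncard := by
  by_contra! hlt
  set N := (G.within {a, b}ᶜ).reachAvoiding (G.neighborSet a) S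
  have hNab : N ⊆ {a, b}ᶜ := SimpleGraph.reachAvoiding_within_subset
    (G.neighborSet_subset_compl_pair hnadj)
  have hconn := hG.2 (S \ {a, b}) ((Set.ncard_le_ncard Set.sdiff_subset).trans_lt hlt)
  have hb : b ∈ G.reachAvoiding {a} (S \ {a, b}) := by
    have := SimpleGraph.subset_reachAvoiding_of_preconnected hconn.preconnected (u := a) (by simp)
    rw [compl_compl] at this
    exact this (by simp)
  have hsub : G.reachAvoiding {a} (S \ {a, b}) ⊆ insert a N := by
    refine SimpleGraph.reachAvoiding_subset (fun v hv => Or.inl hv.1) fun v hv w hvw hw => ?_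
    by_cases hwa : w = a
    · exact Or.inl hwa
    have hwb : w ≠ b := by
      rintro rfl
      rcases hv with rfl | hvN
      exacts [hnadj hvw, Set.disjoint_left.mp hS hvN hvw.symm]
    have hwS : w ∉ S := fun hwS => hw ⟨hwS, by simp [hwa, hwb]⟩
    rcases hv with rfl | hvN
    · exact Or.inr (SimpleGraph.diff_subset_reachAvoiding ⟨hvw, hwS⟩)
    · exact Or.inr (SimpleGraph.reachAvoiding_step hvN ⟨hvw, hNab hvN, by simp [hwa, hwb]⟩ hwS)
  rcases hsub hb with hba | hbN
  exacts [hab hba.symm, hNab hbN (Or.inr rfl)]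

end

/-- every 4-connected graph on at least six vertices has a
`K_{2,4}` minor. -/
theorem fourConnected_hasK24Minor {V : Type*} [Fintype V] (G : SimpleGraph V)
    (hcard : 6 ≤ Fintype.card V) (hG : KConnected 4 G) : IsMinor K24 G := by
  by_cases hcomplete : ∀ u v : V, u ≠ v → G.Adj u v
  · obtain ⟨e⟩ : Nonempty (Fin 2 ⊕ Fin 4 ↪ V) :=
      Function.Embedding.nonempty_of_card_le (by simpa using hcard)
    exact IsMinor.of_injective ⟨e, fun h => hcomplete _ _ (e.injective.ne h.ne)⟩ e.injective
  push Not at hcomplete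
  obtain ⟨a, b, hab, hnadj⟩ := hcomplete
  obtain ⟨C, hCd, hC⟩ := (G.within {a, b}ᶜ).hasConnectors_of_forall_separates
    (G.neighborSet a) (G.neighborSet b) 4 fun S hS => hG.le_ncard_of_separates hab hnadj hS
  refine isMinor_completeBipartiteGraph hab hCd (fun i => (hC i).mono (G.within_le _)) fun i => ?_
  exact SimpleGraph.subset_of_connected_within (hC i).1
    ((hC i).2.1.mono (Set.inter_subset_inter_right _ (G.neighborSet_subset_compl_pair hnadj)))

end K24Paper
end
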